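/- Every nonconstant unary polynomial F of K satisfies F(K₀) ⊆ K₀. (Lemma 4.2(3).) -/
import Mathlib


namespace Paper

/-- Direction of a Turing-machine head move. -/
inductive Dir : Type
  | L | R
deriving DecidableEq

/-- A Turing machine with states μ₀, μ₁, …, μ_k (μ₀ the halting state): for each state
μ_i with 1 ≤ i ≤ k and each tape symbol r, exactly one instruction μ_i r s D μ_m,
recorded as `instr i r = (s, D, m)`.  (The value of `instr` at `i = 0` is irrelevant:
no instruction begins with μ₀.) -/
structure TM (k : ℕ) : Type where
  instr : Fin (k + 1) → Bool → Bool × Dir × Fin (k + 1)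

/-- The universe of the algebra B(T):
`zero` = 0, `P j` = P_j, `one`,`two`,`H` the sequential elements U, and the machine
elements `C b i r s` = C_{ir}^s, `D b i r s` = D_{ir}^s, `M b i r` = M_i^r, where
`b = true` marks the barred copy V̄. -/
inductive BT (k : ℕ) : Type
  | zero : BT k
  | P : Fin 3 → BT k
  | one : BT k
  | two : BT k
  | H : BT k
  | C : Bool → Fin (k + 1) → Bool → Bool → BT k
  | D : Bool → Fin (k + 1) → Bool → Bool → BT k
  | M : Bool → Fin (k + 1) → Bool → BT k
deriving DecidableEq

namespace BT

variable {k : ℕ}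

/-- The partial order of B(T): x ≤ y iff x = 0, or x = y, or (x = P₂ and y ∈ {P₀,P₁}). -/
def le (x y : BT k) : Prop :=
  x = zero ∨ x = y ∨ (x = P 2 ∧ (y = P 0 ∨ y = P 1))

/-- x ∧ y: the greatest lower bound for `le`. -/
def meet (x y : BT k) : BT k :=
  if x = y then x
  else if x = P 2 ∧ (y = P 0 ∨ y = P 1) then P 2
  else if y = P 2 ∧ (x = P 0 ∨ x = P 1) then P 2
  else if (x = P 0 ∨ x = P 1) ∧ (y = P 0 ∨ y = P 1) then P 2
  else zero

/-- membership in P = {P₀,P₁,P₂} -/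
def isP : BT k → Bool
  | P _ => true
  | _ => false

/-- membership in U = {1,2,H} -/
def isU : BT k → Bool
  | one => true
  | two => true
  | H => true
  | _ => false

/-- membership in V ∪ V̄ -/
def isVV : BT k → Bool
  | C _ _ _ _ => true
  | D _ _ _ _ => true
  | M _ _ _ => true
  | _ => false

/-- membership in U ∪ V ∪ V̄ -/
def isUVV (x : BT k) : Bool := isU x || isVV x

/-- membership in V₀ = {C_{0r}^s, D_{0r}^s, M₀^r} (unbarred, state μ₀) -/
def isV0 : BT k → Bool
  | C false i _ _ => i == 0
  | D false i _ _ => i == 0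
  | M false i _ => i == 0
  | _ => false

/-- membership in V₁₀⁰ = {C₁₀⁰, M₁⁰, D₁₀⁰} -/
def isV10 (x : BT k) : Bool :=
  x == C false 1 false false || x == M false 1 false || x == D false 1 false false

/-- the bar involution on V ∪ V̄ (identity elsewhere) -/
def barOp : BT k → BT k
  | C b i r s => C (!b) i r s
  | D b i r s => D (!b) i r s
  | M b i r => M (!b) i r
  | x => x

/-- s₀ = C₁₀⁰, s₁ = M₁⁰, s₂ = D₁₀⁰ -/
def sel : Fin 3 → BT k := ![C false 1 false false, M false 1 false, D false 1 false false]

/-- x ∧ⁱ y = x if x = y ∈ (P ∪ V₁₀⁰) \ {s_i}, else 0. -/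
def meetI (i : Fin 3) (x y : BT k) : BT k :=
  if x = y ∧ (isP x ∨ isV10 x) ∧ x ≠ sel i then x else zero

/-- T₀(x) = P₂ if x ∈ {P₀,P₂}; P₀ if x = P₁; x if x ∈ V₀; else 0. -/
def T0 : BT k → BT k
  | P j => if j = 1 then P 0 else P 2
  | C false i r s => if i = 0 then C false i r s else zero
  | D false i r s => if i = 0 then D false i r s else zero
  | M false i r => if i = 0 then M false i r else zero
  | _ => zero

/-- T₁(x,y). -/
def T1 (x y : BT k) : BT k :=
  if (x = P 0 ∧ y = P 0) ∨ (x = P 0 ∧ y = P 1) ∨ (x = P 1 ∧ y = P 0) ∨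
     (x = P 0 ∧ y = P 2) ∨ (x = P 2 ∧ y = P 0) then P 1
  else if (x = P 1 ∨ x = P 2) ∧ (y = P 1 ∨ y = P 2) then P 2
  else if x = y ∧ isV10 x then x
  else zero

/-- J′(x,y,z) = x ∧ z if x = y or {x,y} ⊆ P; x if x = ȳ ∈ V ∪ V̄; else 0. -/
def J' (x y z : BT k) : BT k :=
  if x = y ∨ (isP x ∧ isP y) then meet x z
  else if isVV y ∧ x = barOp y then x
  else zero

/-- the ternary discriminator: t(x,y,z) = z if x = y, else x. -/
def disc (x y z : BT k) : BT k := if x = y then z else x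

/-- S₁(u,x,y,z). -/
def S1 (u x y z : BT k) : BT k :=
  if (u = one ∨ u = two) ∧ x = y ∧ y = z ∧ isUVV x then x
  else if isP x ∧ isP y ∧ isP z then disc x y z
  else zero

/-- S₂(u,v,x,y,z). -/
def S2 (u v x y z : BT k) : BT k :=
  if isVV v ∧ u = barOp v ∧ x = y ∧ y = z ∧ isVV x then x
  else if isP x ∧ isP y ∧ isP z then disc x y z
  else zero

/-- L_{irt} for the instruction μ_i r s L μ_m (the barred clause is handled by carrying
the bar `b` of the argument through). -/
def Lop (i : Fin (k + 1)) (r s : Bool) (m : Fin (k + 1)) (t : Bool) :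
    BT k → BT k → BT k → BT k := fun x y u =>
  match u with
  | P j => if x = one ∧ y = one then P j else zero
  | C b i' r' s' =>
      if x = one ∧ y = one ∧ i' = i ∧ r' = r then C b m t s'
      else if x = H ∧ y = one ∧ i' = i ∧ r' = r ∧ s' = t then M b m t
      else zero
  | M b i' r' => if x = two ∧ y = H ∧ i' = i ∧ r' = r then D b m t s else zero
  | D b i' r' s' => if x = two ∧ y = two ∧ i' = i ∧ r' = r then D b m t s' else zero
  | _ => zero

/-- R_{irt} for the instruction μ_i r s R μ_m. -/
def Rop (i : Fin (k + 1)) (r s : Bool) (m : Fin (k + 1)) (t : Bool) :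
    BT k → BT k → BT k → BT k := fun x y u =>
  match u with
  | P j => if x = one ∧ y = one then P j else zero
  | C b i' r' s' => if x = one ∧ y = one ∧ i' = i ∧ r' = r then C b m t s' else zero
  | M b i' r' => if x = H ∧ y = one ∧ i' = i ∧ r' = r then C b m t s else zero
  | D b i' r' s' =>
      if x = two ∧ y = H ∧ i' = i ∧ r' = r ∧ s' = t then M b m t
      else if x = two ∧ y = two ∧ i' = i ∧ r' = r then D b m t s'
      else zero
  | _ => zero

end BT

/-- The forward machine operation determined by the unique instruction of T beginning
with μ_i r (for 1 ≤ i ≤ k) and the symbol t. -/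
def fwd {k : ℕ} (T : TM k) (i : Fin (k + 1)) (r t : Bool) :
    BT k → BT k → BT k → BT k :=
  match T.instr i r with
  | (s, Dir.L, m) => BT.Lop i r s m t
  | (s, Dir.R, m) => BT.Rop i r s m t

/-- the reverse of a machine operation: F°(x,y,u) = v when F(x,y,v) = u ≠ 0, else 0. -/
noncomputable def revOp {k : ℕ} (F : BT k → BT k → BT k → BT k) (x y u : BT k) : BT k :=
  haveI := Classical.propDecidable (u ≠ BT.zero ∧ ∃ v, F x y v = u)
  if h : u ≠ BT.zero ∧ ∃ v, F x y v = u then h.2.choose else BT.zero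

/-- The machine operations ℳ: `b = false` gives the forward operation, `b = true` the
reverse operation. -/
noncomputable def mop {k : ℕ} (T : TM k) (i : Fin (k + 1)) (r t : Bool) (b : Bool) :
    BT k → BT k → BT k → BT k :=
  match b with
  | false => fwd T i r t
  | true => revOp (fwd T i r t)

/-- The relation ≺ on U: 2≺2, 2≺H, H≺1, 1≺1. -/
def prec {k : ℕ} : BT k → BT k → Bool
  | BT.two, BT.two => true
  | BT.two, BT.H => true
  | BT.H, BT.one => true
  | BT.one, BT.one => true
  | _, _ => false

/-- U_i¹ built from the machine operation F. -/
def U1op {k : ℕ} (F : BT k → BT k → BT k → BT k) (x y z u : BT k) : BT k :=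
  if prec x y ∧ prec x z ∧ y ≠ z ∧ BT.isVV (F x y u) then BT.barOp (F x y u)
  else if prec x y ∧ y = z then F x y u
  else BT.zero

/-- U_i² built from the machine operation F. -/
def U2op {k : ℕ} (F : BT k → BT k → BT k → BT k) (x y z u : BT k) : BT k :=
  if prec x z ∧ prec y z ∧ x ≠ y ∧ BT.isVV (F y z u) then BT.barOp (F y z u)
  else if x = y ∧ prec y z then F y z u
  else BT.zero

/-- The n-ary polynomials of the algebra B(T): functions obtained by composing the basic
operations (the constant 0, T₀, T₁, ∧, ∧⁰, ∧¹, ∧², J′, S₁, S₂, the forward and reverse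
machine operations, and the U_i¹, U_i²), coordinate projections and constants. -/
inductive PolyB {k : ℕ} (T : TM k) : {n : ℕ} → ((Fin n → BT k) → BT k) → Prop where
  | proj {n : ℕ} (i : Fin n) : PolyB T fun v => v i
  | const {n : ℕ} (c : BT k) : PolyB T fun _ : Fin n → BT k => c
  | t0 {n : ℕ} {p : (Fin n → BT k) → BT k} :
      PolyB T p → PolyB T fun v => BT.T0 (p v)
  | t1 {n : ℕ} {p q : (Fin n → BT k) → BT k} :
      PolyB T p → PolyB T q → PolyB T fun v => BT.T1 (p v) (q v)
  | meet {n : ℕ} {p q : (Fin n → BT k) → BT k} :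
      PolyB T p → PolyB T q → PolyB T fun v => BT.meet (p v) (q v)
  | meetI (j : Fin 3) {n : ℕ} {p q : (Fin n → BT k) → BT k} :
      PolyB T p → PolyB T q → PolyB T fun v => BT.meetI j (p v) (q v)
  | jop {n : ℕ} {p q r : (Fin n → BT k) → BT k} :
      PolyB T p → PolyB T q → PolyB T r → PolyB T fun v => BT.J' (p v) (q v) (r v)
  | s1 {n : ℕ} {p q r s : (Fin n → BT k) → BT k} :
      PolyB T p → PolyB T q → PolyB T r → PolyB T s →
      PolyB T fun v => BT.S1 (p v) (q v) (r v) (s v)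
  | s2 {n : ℕ} {p q r s w : (Fin n → BT k) → BT k} :
      PolyB T p → PolyB T q → PolyB T r → PolyB T s → PolyB T w →
      PolyB T fun v => BT.S2 (p v) (q v) (r v) (s v) (w v)
  | mach (i : Fin (k + 1)) (hi : i ≠ 0) (r t b : Bool) {n : ℕ}
      {p q u : (Fin n → BT k) → BT k} :
      PolyB T p → PolyB T q → PolyB T u →
      PolyB T fun v => mop T i r t b (p v) (q v) (u v)
  | u1 (i : Fin (k + 1)) (hi : i ≠ 0) (r t b : Bool) {n : ℕ}
      {p q r' s : (Fin n → BT k) → BT k} :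
      PolyB T p → PolyB T q → PolyB T r' → PolyB T s →
      PolyB T fun v => U1op (mop T i r t b) (p v) (q v) (r' v) (s v)
  | u2 (i : Fin (k + 1)) (hi : i ≠ 0) (r t b : Bool) {n : ℕ}
      {p q r' s : (Fin n → BT k) → BT k} :
      PolyB T p → PolyB T q → PolyB T r' → PolyB T s →
      PolyB T fun v => U2op (mop T i r t b) (p v) (q v) (r' v) (s v)

/-- unary polynomials of B(T) -/
def UPolyB {k : ℕ} (T : TM k) (F : BT k → BT k) : Prop :=
  PolyB T (n := 1) fun v => F (v 0)

/-- binary polynomials of B(T) -/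
def BPolyB {k : ℕ} (T : TM k) (F : BT k → BT k → BT k) : Prop :=
  PolyB T (n := 2) fun v => F (v 0) (v 1)

/-- A Turing machine configuration ⟨tape, head position, state⟩. -/
structure Cfg (k : ℕ) : Type where
  tape : ℤ → Bool
  pos : ℤ
  state : Fin (k + 1)

/-- One computation step of T (halted configurations, in state μ₀, are fixed). -/
def cfgStep {k : ℕ} (T : TM k) (c : Cfg k) : Cfg k :=
  if c.state = 0 then c
  else
    match T.instr c.state (c.tape c.pos) with
    | (s, Dir.L, m) => ⟨Function.update c.tape c.pos s, c.pos - 1, m⟩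
    | (s, Dir.R, m) => ⟨Function.update c.tape c.pos s, c.pos + 1, m⟩

/-- The initial configuration Q₀ = ⟨t₀, 0, μ₁⟩, t₀ the all-zero tape. -/
def Q0 (k : ℕ) : Cfg k := ⟨fun _ => false, 0, 1⟩

/-- N = {n₀,…,n_m} ∪ {−1,0,1}: the squares visited during the halting computation
Q₀, …, Q_m, together with −1, 0, 1. -/
def Nset {k : ℕ} (T : TM k) (m : ℕ) : Finset ℤ :=
  ((Finset.range (m + 1)).image fun j => ((cfgStep T)^[j] (Q0 k)).pos) ∪ {-1, 0, 1}

/-- The universe of the direct power A = B(T)^Y, where Y = {s₀} ∪ N: the coordinate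
`none` is the extra coordinate s₀ ∉ N, and `some x` the coordinate x ∈ N. -/
abbrev AA {k : ℕ} (T : TM k) (m : ℕ) : Type := Option {x : ℤ // x ∈ Nset T m} → BT k

/-- The sequential generator a_n (n ∈ N). -/
def aEl {k : ℕ} (T : TM k) (m : ℕ) (n : ℤ) : AA T m := fun y =>
  match y with
  | none => BT.one
  | some x => if x.1 < n then BT.one else if x.1 = n then BT.H else BT.two

/-- The generator q^j (j ∈ {0,1,2}). -/
def qEl {k : ℕ} (T : TM k) (m : ℕ) (j : Fin 3) : AA T m := fun y =>
  match y with
  | none => BT.P j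
  | some x =>
      if x.1 < 0 then BT.C false 1 false false
      else if x.1 = 0 then BT.M false 1 false
      else BT.D false 1 false false

/-- K: the subalgebra of A = B(T)^Y generated by S ∪ {q⁰,q¹,q²}
(operations computed coordinatewise). -/
inductive InK {k : ℕ} (T : TM k) (m : ℕ) : AA T m → Prop where
  | gen_a (n : ℤ) (hn : n ∈ Nset T m) : InK T m (aEl T m n)
  | gen_q (j : Fin 3) : InK T m (qEl T m j)
  | zeroOp : InK T m fun _ => BT.zero
  | t0 {f : AA T m} : InK T m f → InK T m fun y => BT.T0 (f y)
  | t1 {f g : AA T m} : InK T m f → InK T m g → InK T m fun y => BT.T1 (f y) (g y)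
  | meet {f g : AA T m} : InK T m f → InK T m g → InK T m fun y => BT.meet (f y) (g y)
  | meetI (j : Fin 3) {f g : AA T m} :
      InK T m f → InK T m g → InK T m fun y => BT.meetI j (f y) (g y)
  | jop {f g h : AA T m} : InK T m f → InK T m g → InK T m h →
      InK T m fun y => BT.J' (f y) (g y) (h y)
  | s1 {f g h p : AA T m} : InK T m f → InK T m g → InK T m h → InK T m p →
      InK T m fun y => BT.S1 (f y) (g y) (h y) (p y)
  | s2 {f g h p q : AA T m} : InK T m f → InK T m g → InK T m h → InK T m p → InK T m q →
      InK T m fun y => BT.S2 (f y) (g y) (h y) (p y) (q y)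
  | mach (i : Fin (k + 1)) (hi : i ≠ 0) (r t b : Bool) {f g h : AA T m} :
      InK T m f → InK T m g → InK T m h →
      InK T m fun y => mop T i r t b (f y) (g y) (h y)
  | u1 (i : Fin (k + 1)) (hi : i ≠ 0) (r t b : Bool) {f g h p : AA T m} :
      InK T m f → InK T m g → InK T m h → InK T m p →
      InK T m fun y => U1op (mop T i r t b) (f y) (g y) (h y) (p y)
  | u2 (i : Fin (k + 1)) (hi : i ≠ 0) (r t b : Bool) {f g h p : AA T m} :
      InK T m f → InK T m g → InK T m h → InK T m p →
      InK T m fun y => U2op (mop T i r t b) (f y) (g y) (h y) (p y)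

/-- The n-ary polynomials of the algebra K: compositions of the basic operations
(computed coordinatewise), coordinate projections, and constants from K. -/
inductive PolyK {k : ℕ} (T : TM k) (m : ℕ) :
    {n : ℕ} → ((Fin n → AA T m) → AA T m) → Prop where
  | proj {n : ℕ} (i : Fin n) : PolyK T m fun v => v i
  | const {n : ℕ} (c : AA T m) (hc : InK T m c) : PolyK T m fun _ : Fin n → AA T m => c
  | zeroOp {n : ℕ} : PolyK T m fun (_ : Fin n → AA T m) _ => BT.zero
  | t0 {n : ℕ} {p : (Fin n → AA T m) → AA T m} :
      PolyK T m p → PolyK T m fun v y => BT.T0 (p v y)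
  | t1 {n : ℕ} {p q : (Fin n → AA T m) → AA T m} :
      PolyK T m p → PolyK T m q → PolyK T m fun v y => BT.T1 (p v y) (q v y)
  | meet {n : ℕ} {p q : (Fin n → AA T m) → AA T m} :
      PolyK T m p → PolyK T m q → PolyK T m fun v y => BT.meet (p v y) (q v y)
  | meetI (j : Fin 3) {n : ℕ} {p q : (Fin n → AA T m) → AA T m} :
      PolyK T m p → PolyK T m q → PolyK T m fun v y => BT.meetI j (p v y) (q v y)
  | jop {n : ℕ} {p q r : (Fin n → AA T m) → AA T m} :
      PolyK T m p → PolyK T m q → PolyK T m r →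
      PolyK T m fun v y => BT.J' (p v y) (q v y) (r v y)
  | s1 {n : ℕ} {p q r s : (Fin n → AA T m) → AA T m} :
      PolyK T m p → PolyK T m q → PolyK T m r → PolyK T m s →
      PolyK T m fun v y => BT.S1 (p v y) (q v y) (r v y) (s v y)
  | s2 {n : ℕ} {p q r s w : (Fin n → AA T m) → AA T m} :
      PolyK T m p → PolyK T m q → PolyK T m r → PolyK T m s → PolyK T m w →
      PolyK T m fun v y => BT.S2 (p v y) (q v y) (r v y) (s v y) (w v y)
  | mach (i : Fin (k + 1)) (hi : i ≠ 0) (r t b : Bool) {n : ℕ}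
      {p q u : (Fin n → AA T m) → AA T m} :
      PolyK T m p → PolyK T m q → PolyK T m u →
      PolyK T m fun v y => mop T i r t b (p v y) (q v y) (u v y)
  | u1 (i : Fin (k + 1)) (hi : i ≠ 0) (r t b : Bool) {n : ℕ}
      {p q r' s : (Fin n → AA T m) → AA T m} :
      PolyK T m p → PolyK T m q → PolyK T m r' → PolyK T m s →
      PolyK T m fun v y => U1op (mop T i r t b) (p v y) (q v y) (r' v y) (s v y)
  | u2 (i : Fin (k + 1)) (hi : i ≠ 0) (r t b : Bool) {n : ℕ}
      {p q r' s : (Fin n → AA T m) → AA T m} :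
      PolyK T m p → PolyK T m q → PolyK T m r' → PolyK T m s →
      PolyK T m fun v y => U2op (mop T i r t b) (p v y) (q v y) (r' v y) (s v y)

/-- unary polynomials of K -/
def UPolyK {k : ℕ} (T : TM k) (m : ℕ) (F : AA T m → AA T m) : Prop :=
  PolyK T m (n := 1) fun v => F (v 0)

/-- binary polynomials of K -/
def BPolyK {k : ℕ} (T : TM k) (m : ℕ) (F : AA T m → AA T m → AA T m) : Prop :=
  PolyK T m (n := 2) fun v => F (v 0) (v 1)

/-- Q ∈ Cfg⋆: T, started in configuration Q, reaches the halting configuration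
Q_m in finitely many steps, the head visiting only squares in N. -/
def InCfgStar {k : ℕ} (T : TM k) (m : ℕ) (Q : Cfg k) : Prop :=
  ∃ j : ℕ, (cfgStep T)^[j] Q = (cfgStep T)^[m] (Q0 k) ∧
    ∀ l ≤ j, ((cfgStep T)^[l] Q).pos ∈ Nset T m

/-- β^j(Q): the encoding of the configuration Q (with P_j in coordinate s₀). -/
def betaEl {k : ℕ} (T : TM k) (m : ℕ) (j : Fin 3) (Q : Cfg k) : AA T m := fun y =>
  match y with
  | none => BT.P j
  | some x =>
      if x.1 < Q.pos then BT.C false Q.state (Q.tape Q.pos) (Q.tape x.1)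
      else if x.1 = Q.pos then BT.M false Q.state (Q.tape Q.pos)
      else BT.D false Q.state (Q.tape Q.pos) (Q.tape x.1)

/-- K₀ = {f ∈ K : f(x) = 0 for some x ∈ N}. -/
def K0 {k : ℕ} (T : TM k) (m : ℕ) : Set (AA T m) :=
  {f | InK T m f ∧ ∃ x : {x : ℤ // x ∈ Nset T m}, f (some x) = BT.zero}

/-- S = {a_n : n ∈ N}. -/
def Sset {k : ℕ} (T : TM k) (m : ℕ) : Set (AA T m) :=
  {f | ∃ n ∈ Nset T m, f = aEl T m n}

/-- Λ = {β^j(Q) : Q ∈ Cfg⋆, j ∈ {0,1,2}}. -/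
def Lam {k : ℕ} (T : TM k) (m : ℕ) : Set (AA T m) :=
  {f | ∃ (j : Fin 3) (Q : Cfg k), InCfgStar T m Q ∧ f = betaEl T m j Q}

/-- θ: (f,g) ∈ θ iff f, g ∈ K and for every unary polynomial F of K,
F(f) = q² ⇔ F(g) = q². -/
def theta {k : ℕ} (T : TM k) (m : ℕ) (f g : AA T m) : Prop :=
  InK T m f ∧ InK T m g ∧
    ∀ F : AA T m → AA T m, UPolyK T m F → (F f = qEl T m 2 ↔ F g = qEl T m 2)

/-- A congruence of K: an equivalence relation on K preserved by all basic operations. -/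
structure IsCongK {k : ℕ} (T : TM k) (m : ℕ) (R : AA T m → AA T m → Prop) : Prop where
  refl : ∀ f, InK T m f → R f f
  symm : ∀ {f g}, R f g → R g f
  trans : ∀ {f g h}, R f g → R g h → R f h
  dom : ∀ {f g}, R f g → InK T m f ∧ InK T m g
  t0 : ∀ {f f'}, R f f' → R (fun y => BT.T0 (f y)) (fun y => BT.T0 (f' y))
  t1 : ∀ {f f' g g'}, R f f' → R g g' →
    R (fun y => BT.T1 (f y) (g y)) (fun y => BT.T1 (f' y) (g' y))
  meet : ∀ {f f' g g'}, R f f' → R g g' →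
    R (fun y => BT.meet (f y) (g y)) (fun y => BT.meet (f' y) (g' y))
  meetI : ∀ (j : Fin 3) {f f' g g'}, R f f' → R g g' →
    R (fun y => BT.meetI j (f y) (g y)) (fun y => BT.meetI j (f' y) (g' y))
  jop : ∀ {f f' g g' h h'}, R f f' → R g g' → R h h' →
    R (fun y => BT.J' (f y) (g y) (h y)) (fun y => BT.J' (f' y) (g' y) (h' y))
  s1 : ∀ {f f' g g' h h' p p'}, R f f' → R g g' → R h h' → R p p' →
    R (fun y => BT.S1 (f y) (g y) (h y) (p y))
      (fun y => BT.S1 (f' y) (g' y) (h' y) (p' y))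
  s2 : ∀ {f f' g g' h h' p p' q q'}, R f f' → R g g' → R h h' → R p p' → R q q' →
    R (fun y => BT.S2 (f y) (g y) (h y) (p y) (q y))
      (fun y => BT.S2 (f' y) (g' y) (h' y) (p' y) (q' y))
  mach : ∀ (i : Fin (k + 1)), i ≠ 0 → ∀ (r t b : Bool) {f f' g g' h h'},
    R f f' → R g g' → R h h' →
    R (fun y => mop T i r t b (f y) (g y) (h y))
      (fun y => mop T i r t b (f' y) (g' y) (h' y))
  u1 : ∀ (i : Fin (k + 1)), i ≠ 0 → ∀ (r t b : Bool) {f f' g g' h h' p p'},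
    R f f' → R g g' → R h h' → R p p' →
    R (fun y => U1op (mop T i r t b) (f y) (g y) (h y) (p y))
      (fun y => U1op (mop T i r t b) (f' y) (g' y) (h' y) (p' y))
  u2 : ∀ (i : Fin (k + 1)), i ≠ 0 → ∀ (r t b : Bool) {f f' g g' h h' p p'},
    R f f' → R g g' → R h h' → R p p' →
    R (fun y => U2op (mop T i r t b) (f y) (g y) (h y) (p y))
      (fun y => U2op (mop T i r t b) (f' y) (g' y) (h' y) (p' y))

/-- θ̄: the smallest congruence of K containing θ ∪ {(q⁰,q²)} (the intersection of all
congruences of K containing θ and (q⁰,q²)). -/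
def thetaBar {k : ℕ} (T : TM k) (m : ℕ) (f g : AA T m) : Prop :=
  InK T m f ∧ InK T m g ∧
    ∀ R : AA T m → AA T m → Prop, IsCongK T m R → (∀ a b, theta T m a b → R a b) →
      R (qEl T m 0) (qEl T m 2) → R f g

namespace Aux

open BT

variable {k : ℕ}

/-- membership in unbarred V -/
def isVV0 : BT k → Bool
  | .C false _ _ _ => true
  | .D false _ _ _ => true
  | .M false _ _ => true
  | _ => false

lemma isVV0_isVV {a : BT k} (h : isVV0 a = true) : BT.isVV a = true := by
  cases a <;> simp_all [isVV0, BT.isVV]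

lemma isVV0_not_isP {a : BT k} (h : isVV0 a = true) : BT.isP a = false := by
  cases a <;> simp_all [isVV0, BT.isP]

lemma ne_P {a : BT k} (h : BT.isP a = false) (j : Fin 3) : a ≠ BT.P j := by
  intro e; subst e; simp [BT.isP] at h

lemma barOp_ne_zero {b : BT k} (h : BT.isVV b = true) : BT.barOp b ≠ BT.zero := by
  cases b <;> simp_all [BT.isVV, BT.barOp]

lemma isVV0_barOp {b : BT k} (h : isVV0 b = true) : isVV0 (BT.barOp b) = false := by
  cases b with
  | C c i r s => cases c <;> simp_all [isVV0, BT.barOp]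
  | D c i r s => cases c <;> simp_all [isVV0, BT.barOp]
  | M c i r => cases c <;> simp_all [isVV0, BT.barOp]
  | _ => simp_all [isVV0]

lemma isVV_zero : BT.isVV (BT.zero : BT k) = false := rfl
lemma isP_zero : BT.isP (BT.zero : BT k) = false := rfl
lemma isUVV_zero : BT.isUVV (BT.zero : BT k) = false := rfl

-- meet lemmas
lemma meet_zero_left (a : BT k) : BT.meet BT.zero a = BT.zero := by
  unfold BT.meet; split_ifs with h1 h2 h3 h4 <;> simp_all

lemma meet_zero_right (a : BT k) : BT.meet a BT.zero = BT.zero := by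
  unfold BT.meet; split_ifs with h1 h2 h3 h4 <;> simp_all

lemma meet_nonP {a b : BT k} (ha : BT.isP a = false) (h : BT.meet a b ≠ BT.zero) :
    a = b ∧ BT.meet a b = a := by
  have h2 : ¬(a = BT.P 2 ∧ (b = BT.P 0 ∨ b = BT.P 1)) := fun e => ne_P ha 2 e.1
  have h4 : ¬((a = BT.P 0 ∨ a = BT.P 1) ∧ (b = BT.P 0 ∨ b = BT.P 1)) := by
    rintro ⟨e | e, -⟩ <;> exact ne_P ha _ e
  have h3 : ¬(b = BT.P 2 ∧ (a = BT.P 0 ∨ a = BT.P 1)) := by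
    rintro ⟨-, e | e⟩ <;> exact ne_P ha _ e
  by_cases hab : a = b
  · exact ⟨hab, by simp [BT.meet, hab]⟩
  · exfalso; apply h; simp [BT.meet, hab, h2, h3, h4]

lemma isP_meet {a b : BT k} (ha : BT.isP a = false) :
    BT.isP (BT.meet a b) = false := by
  by_cases hz : BT.meet a b = BT.zero
  · rw [hz]; rfl
  · rw [(meet_nonP ha hz).2]; exact ha

-- T0 lemmas
lemma T0_zero : BT.T0 (BT.zero : BT k) = BT.zero := rfl
lemma T0_one : BT.T0 (BT.one : BT k) = BT.zero := rfl
lemma T0_two : BT.T0 (BT.two : BT k) = BT.zero := rfl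
lemma T0_H : BT.T0 (BT.H : BT k) = BT.zero := rfl

lemma T0_vv0 {a : BT k} (ha : isVV0 a = true) (h : BT.T0 a ≠ BT.zero) :
    BT.T0 a = a := by
  cases a with
  | C b i r s => cases b <;> simp_all [BT.T0, isVV0] <;> split_ifs at h ⊢ <;> simp_all
  | D b i r s => cases b <;> simp_all [BT.T0, isVV0] <;> split_ifs at h ⊢ <;> simp_all
  | M b i r => cases b <;> simp_all [BT.T0, isVV0] <;> split_ifs at h ⊢ <;> simp_all
  | _ => simp_all [isVV0]

lemma isP_T0 {a : BT k} (ha : BT.isP a = false) : BT.isP (BT.T0 a) = false := by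
  cases a with
  | P j => simp [BT.isP] at ha
  | C b i r s => cases b <;> simp only [BT.T0] <;> (try split_ifs) <;> rfl
  | D b i r s => cases b <;> simp only [BT.T0] <;> (try split_ifs) <;> rfl
  | M b i r => cases b <;> simp only [BT.T0] <;> (try split_ifs) <;> rfl
  | _ => rfl

-- isV10
lemma isV10_cases {a : BT k} (h : BT.isV10 a = true) :
    a = BT.C false 1 false false ∨ a = BT.M false 1 false ∨ a = BT.D false 1 false false := by
  unfold BT.isV10 at h
  rcases Bool.or_eq_true_iff.1 h with h | h
  · rcases Bool.or_eq_true_iff.1 h with h | h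
    · exact Or.inl (beq_iff_eq.1 h)
    · exact Or.inr (Or.inl (beq_iff_eq.1 h))
  · exact Or.inr (Or.inr (beq_iff_eq.1 h))

lemma isV10_vv0 {a : BT k} (h : BT.isV10 a = true) : isVV0 a = true := by
  rcases isV10_cases h with h | h | h <;> subst h <;> rfl

-- T1 lemmas
lemma T1_zero_left (b : BT k) : BT.T1 BT.zero b = BT.zero := by
  unfold BT.T1; split_ifs with h1 h2 h3 <;> simp_all [BT.isV10]

lemma T1_zero_right (a : BT k) : BT.T1 a BT.zero = BT.zero := by
  unfold BT.T1
  split_ifs with h1 h2 h3 <;> simp_all [BT.isV10]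

lemma T1_nonP {a b : BT k} (ha : BT.isP a = false) (h : BT.T1 a b ≠ BT.zero) :
    a = b ∧ BT.isV10 a = true ∧ BT.T1 a b = a := by
  have h1 : ¬((a = BT.P 0 ∧ b = BT.P 0) ∨ (a = BT.P 0 ∧ b = BT.P 1) ∨ (a = BT.P 1 ∧ b = BT.P 0) ∨
      (a = BT.P 0 ∧ b = BT.P 2) ∨ (a = BT.P 2 ∧ b = BT.P 0)) := by
    rintro (⟨e, -⟩ | ⟨e, -⟩ | ⟨e, -⟩ | ⟨e, -⟩ | ⟨e, -⟩) <;> exact ne_P ha _ e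
  have h2 : ¬((a = BT.P 1 ∨ a = BT.P 2) ∧ (b = BT.P 1 ∨ b = BT.P 2)) := by
    rintro ⟨e | e, -⟩ <;> exact ne_P ha _ e
  unfold BT.T1 at h ⊢
  rw [if_neg h1, if_neg h2] at h ⊢
  split_ifs at h ⊢ with h3
  · exact ⟨h3.1, h3.2, rfl⟩
  · exact absurd rfl h

lemma isP_T1 {a b : BT k} (ha : BT.isP a = false) : BT.isP (BT.T1 a b) = false := by
  by_cases h : BT.T1 a b = BT.zero
  · rw [h]; rfl
  · rw [(T1_nonP ha h).2.2]; exact ha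

-- meetI lemmas
lemma meetI_zero_left (j : Fin 3) (b : BT k) : BT.meetI j BT.zero b = BT.zero := by
  unfold BT.meetI; split_ifs with h <;> simp_all [BT.isP, BT.isV10]

lemma meetI_zero_right (j : Fin 3) (a : BT k) : BT.meetI j a BT.zero = BT.zero := by
  unfold BT.meetI; split_ifs with h
  · rcases h with ⟨rfl, h2, -⟩; simp [BT.isP, BT.isV10] at h2
  · rfl

lemma meetI_ne {j : Fin 3} {a b : BT k} (ha : BT.isP a = false)
    (h : BT.meetI j a b ≠ BT.zero) :
    a = b ∧ BT.isV10 a = true ∧ BT.meetI j a b = a := by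
  unfold BT.meetI at h ⊢
  split_ifs at h ⊢ with h1
  · rcases h1 with ⟨e, h2, -⟩
    refine ⟨e, ?_, rfl⟩
    rcases h2 with h2 | h2
    · rw [ha] at h2; exact absurd h2 (by simp)
    · exact h2
  · exact absurd rfl h

lemma isP_meetI {j : Fin 3} {a b : BT k} (ha : BT.isP a = false) :
    BT.isP (BT.meetI j a b) = false := by
  by_cases h : BT.meetI j a b = BT.zero
  · rw [h]; rfl
  · rw [(meetI_ne ha h).2.2]; exact ha

-- J' lemmas
lemma J'_zero_left (b c : BT k) : BT.J' BT.zero b c = BT.zero := by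
  unfold BT.J'
  split_ifs with h1 h2
  · exact meet_zero_left c
  · exact absurd h2.2.symm (barOp_ne_zero h2.1)
  · rfl

lemma J'_zero_mid (a c : BT k) : BT.J' a BT.zero c = BT.zero := by
  unfold BT.J'
  split_ifs with h1 h2
  · rcases h1 with rfl | ⟨-, e⟩
    · exact meet_zero_left c
    · simp [BT.isP] at e
  · simp [BT.isVV] at h2
  · rfl

lemma J'_nonP {a b c : BT k} (ha : BT.isP a = false) (h : BT.J' a b c ≠ BT.zero) :
    BT.J' a b c = a := by
  unfold BT.J' at h ⊢
  split_ifs at h ⊢ with h1 h2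
  · rcases h1 with rfl | ⟨e, -⟩
    · exact (meet_nonP ha h).2
    · rw [ha] at e; exact absurd e (by simp)
  · rfl
  · exact absurd rfl h

lemma isP_J' {a b c : BT k} (ha : BT.isP a = false) : BT.isP (BT.J' a b c) = false := by
  by_cases h : BT.J' a b c = BT.zero
  · rw [h]; rfl
  · rw [J'_nonP ha h]; exact ha

-- S1 lemmas
lemma S1_zero_x (a c d : BT k) : BT.S1 a BT.zero c d = BT.zero := by
  unfold BT.S1
  split_ifs with h1 h2
  · exact absurd h1.2.2.2 (by simp [BT.isUVV, BT.isU, BT.isVV])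
  · exact absurd h2.1 (by simp [BT.isP])
  · rfl

lemma S1_zero_y (a b d : BT k) : BT.S1 a b BT.zero d = BT.zero := by
  unfold BT.S1
  split_ifs with h1 h2
  · rcases h1 with ⟨-, rfl, -, e⟩; simp [BT.isUVV, BT.isU, BT.isVV] at e
  · exact absurd h2.2.1 (by simp [BT.isP])
  · rfl

lemma S1_zero_z (a b c : BT k) : BT.S1 a b c BT.zero = BT.zero := by
  unfold BT.S1
  split_ifs with h1 h2
  · rcases h1 with ⟨-, e1, e2, e⟩; rw [e1, e2] at e; simp [BT.isUVV, BT.isU, BT.isVV] at e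
  · exact absurd h2.2.2 (by simp [BT.isP])
  · rfl

lemma S1_zero_u {b : BT k} (hb : BT.isP b = false) (c d : BT k) :
    BT.S1 BT.zero b c d = BT.zero := by
  have hA : ¬(((BT.zero : BT k) = BT.one ∨ (BT.zero : BT k) = BT.two) ∧ b = c ∧ c = d ∧
      BT.isUVV b = true) := by
    rintro ⟨e | e, -⟩ <;> exact absurd e (by simp)
  have hB : ¬(BT.isP b = true ∧ BT.isP c = true ∧ BT.isP d = true) := by
    rintro ⟨e, -⟩; rw [hb] at e; exact absurd e (by simp)
  unfold BT.S1; rw [if_neg hA, if_neg hB]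

lemma S1_nonP {a b c d : BT k} (hb : BT.isP b = false) (h : BT.S1 a b c d ≠ BT.zero) :
    BT.S1 a b c d = b := by
  unfold BT.S1 at h ⊢
  split_ifs at h ⊢ with h1 h2
  · rfl
  · rw [hb] at h2; exact absurd h2.1 (by simp)
  · exact absurd rfl h

lemma isP_S1 {a b c d : BT k} (hb : BT.isP b = false) : BT.isP (BT.S1 a b c d) = false := by
  by_cases h : BT.S1 a b c d = BT.zero
  · rw [h]; rfl
  · rw [S1_nonP hb h]; exact hb

-- S2 lemmas
lemma S2_zero_u {x : BT k} (hx : BT.isP x = false) (v y z : BT k) :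
    BT.S2 BT.zero v x y z = BT.zero := by
  unfold BT.S2
  split_ifs with h1 h2
  · exact absurd h1.2.1.symm (barOp_ne_zero h1.1)
  · rw [hx] at h2; exact absurd h2.1 (by simp)
  · rfl

lemma S2_zero_v {x : BT k} (hx : BT.isP x = false) (u y z : BT k) :
    BT.S2 u BT.zero x y z = BT.zero := by
  unfold BT.S2
  split_ifs with h1 h2
  · exact absurd h1.1 (by simp [BT.isVV])
  · rw [hx] at h2; exact absurd h2.1 (by simp)
  · rfl

lemma S2_zero_x (u v y z : BT k) : BT.S2 u v BT.zero y z = BT.zero := by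
  unfold BT.S2
  split_ifs with h1 h2
  · exact absurd h1.2.2.2.2 (by simp [BT.isVV])
  · exact absurd h2.1 (by simp [BT.isP])
  · rfl

lemma S2_zero_y (u v x z : BT k) : BT.S2 u v x BT.zero z = BT.zero := by
  unfold BT.S2
  split_ifs with h1 h2
  · rcases h1 with ⟨-, -, rfl, -, e⟩; simp [BT.isVV] at e
  · exact absurd h2.2.1 (by simp [BT.isP])
  · rfl

lemma S2_zero_z (u v x y : BT k) : BT.S2 u v x y BT.zero = BT.zero := by
  unfold BT.S2
  split_ifs with h1 h2
  · rcases h1 with ⟨-, -, e1, e2, e⟩; rw [e1, e2] at e; simp [BT.isVV] at e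
  · exact absurd h2.2.2 (by simp [BT.isP])
  · rfl

lemma S2_nonP {u v x y z : BT k} (hx : BT.isP x = false) (h : BT.S2 u v x y z ≠ BT.zero) :
    BT.S2 u v x y z = x := by
  unfold BT.S2 at h ⊢
  split_ifs at h ⊢ with h1 h2
  · rfl
  · rw [hx] at h2; exact absurd h2.1 (by simp)
  · exact absurd rfl h

lemma isP_S2 {u v x y z : BT k} (hx : BT.isP x = false) :
    BT.isP (BT.S2 u v x y z) = false := by
  by_cases h : BT.S2 u v x y z = BT.zero
  · rw [h]; rfl
  · rw [S2_nonP hx h]; exact hx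

-- prec lemmas
lemma prec_zero_left (b : BT k) : prec (BT.zero : BT k) b = false := by
  cases b <;> rfl

lemma prec_zero_right (a : BT k) : prec a (BT.zero : BT k) = false := by
  cases a <;> rfl

lemma prec_vv0_right {b : BT k} (hb : isVV0 b = true) (a : BT k) : prec a b = false := by
  cases b <;> cases a <;> simp_all [isVV0, prec]

lemma prec_vv0_left {a : BT k} (ha : isVV0 a = true) (b : BT k) : prec a b = false := by
  cases a <;> cases b <;> simp_all [isVV0, prec]

lemma prec_H_right {a : BT k} (h : prec a (BT.H : BT k) = true) : a = BT.two := by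
  cases a <;> simp_all [prec]

lemma prec_H_left {b : BT k} (h : prec (BT.H : BT k) b = true) : b = BT.one := by
  cases b <;> simp_all [prec]

lemma prec_two_one : prec (BT.two : BT k) BT.one = false := rfl

-- Lop lemmas
variable {i mm : Fin (k + 1)} {r s t : Bool}

lemma lop_zero_left (y u : BT k) : BT.Lop i r s mm t BT.zero y u = BT.zero := by
  cases u <;> simp [BT.Lop]

lemma lop_zero_mid (x u : BT k) : BT.Lop i r s mm t x BT.zero u = BT.zero := by
  cases u <;> simp [BT.Lop]

lemma lop_zero_u (x y : BT k) : BT.Lop i r s mm t x y BT.zero = BT.zero := rfl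

lemma rop_zero_left (y u : BT k) : BT.Rop i r s mm t BT.zero y u = BT.zero := by
  cases u <;> simp [BT.Rop]

lemma rop_zero_mid (x u : BT k) : BT.Rop i r s mm t x BT.zero u = BT.zero := by
  cases u <;> simp [BT.Rop]

lemma rop_zero_u (x y : BT k) : BT.Rop i r s mm t x y BT.zero = BT.zero := rfl

lemma lop_U_u (x y : BT k) : BT.Lop i r s mm t x y BT.one = BT.zero ∧
    BT.Lop i r s mm t x y BT.two = BT.zero ∧ BT.Lop i r s mm t x y BT.H = BT.zero :=
  ⟨rfl, rfl, rfl⟩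

lemma rop_U_u (x y : BT k) : BT.Rop i r s mm t x y BT.one = BT.zero ∧
    BT.Rop i r s mm t x y BT.two = BT.zero ∧ BT.Rop i r s mm t x y BT.H = BT.zero :=
  ⟨rfl, rfl, rfl⟩

lemma isP_lop {u : BT k} (hu : BT.isP u = false) (x y : BT k) :
    BT.isP (BT.Lop i r s mm t x y u) = false := by
  cases u <;> simp_all [BT.Lop, BT.isP] <;> split_ifs <;> rfl

lemma isP_rop {u : BT k} (hu : BT.isP u = false) (x y : BT k) :
    BT.isP (BT.Rop i r s mm t x y u) = false := by
  cases u <;> simp_all [BT.Rop, BT.isP] <;> split_ifs <;> rfl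

lemma isVV0_shape {a : BT k} (h : isVV0 a = true) :
    (∃ i r s, a = BT.C false i r s) ∨ (∃ i r s, a = BT.D false i r s) ∨
      (∃ i r, a = BT.M false i r) := by
  cases a with
  | C b i r s => cases b
                 · exact Or.inl ⟨i, r, s, rfl⟩
                 · simp [isVV0] at h
  | D b i r s => cases b
                 · exact Or.inr (Or.inl ⟨i, r, s, rfl⟩)
                 · simp [isVV0] at h
  | M b i r => cases b
               · exact Or.inr (Or.inr ⟨i, r, rfl⟩)
               · simp [isVV0] at h
  | _ => simp [isVV0] at h

lemma vv0_lop {u : BT k} (hu : isVV0 u = true) (x y : BT k)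
    (h : BT.Lop i r s mm t x y u ≠ BT.zero) : isVV0 (BT.Lop i r s mm t x y u) = true := by
  rcases isVV0_shape hu with ⟨i2, r2, s2, rfl⟩ | ⟨i2, r2, s2, rfl⟩ | ⟨i2, r2, rfl⟩ <;>
    simp only [BT.Lop] at h ⊢ <;> split_ifs at h ⊢ <;> simp_all [isVV0]

lemma vv0_rop {u : BT k} (hu : isVV0 u = true) (x y : BT k)
    (h : BT.Rop i r s mm t x y u ≠ BT.zero) : isVV0 (BT.Rop i r s mm t x y u) = true := by
  rcases isVV0_shape hu with ⟨i2, r2, s2, rfl⟩ | ⟨i2, r2, s2, rfl⟩ | ⟨i2, r2, rfl⟩ <;>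
    simp only [BT.Rop] at h ⊢ <;> split_ifs at h ⊢ <;> simp_all [isVV0]

lemma lop_out {x y v : BT k} (h : BT.Lop i r s mm t x y v ≠ BT.zero) :
    BT.isP (BT.Lop i r s mm t x y v) = true ∨ BT.isVV (BT.Lop i r s mm t x y v) = true := by
  cases v <;> simp_all [BT.Lop] <;> (try split_ifs at h ⊢) <;> simp_all [BT.isP, BT.isVV]

lemma rop_out {x y v : BT k} (h : BT.Rop i r s mm t x y v ≠ BT.zero) :
    BT.isP (BT.Rop i r s mm t x y v) = true ∨ BT.isVV (BT.Rop i r s mm t x y v) = true := by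
  cases v <;> simp_all [BT.Rop] <;> (try split_ifs at h ⊢) <;> simp_all [BT.isP, BT.isVV]

lemma lop_pre_vv0 {x y v : BT k} (h : isVV0 (BT.Lop i r s mm t x y v) = true) :
    isVV0 v = true := by
  cases v with
  | C b i2 r2 s2 =>
      cases b
      · rfl
      · simp only [BT.Lop] at h; split_ifs at h <;> simp [isVV0] at h
  | D b i2 r2 s2 =>
      cases b
      · rfl
      · simp only [BT.Lop] at h; split_ifs at h <;> simp [isVV0] at h
  | M b i2 r2 =>
      cases b
      · rfl
      · simp only [BT.Lop] at h; split_ifs at h <;> simp [isVV0] at h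
  | P j => simp only [BT.Lop] at h; split_ifs at h <;> simp [isVV0] at h
  | zero => simp only [BT.Lop] at h; simp [isVV0] at h
  | one => simp only [BT.Lop] at h; simp [isVV0] at h
  | two => simp only [BT.Lop] at h; simp [isVV0] at h
  | H => simp only [BT.Lop] at h; simp [isVV0] at h

lemma rop_pre_vv0 {x y v : BT k} (h : isVV0 (BT.Rop i r s mm t x y v) = true) :
    isVV0 v = true := by
  cases v with
  | C b i2 r2 s2 =>
      cases b
      · rfl
      · simp only [BT.Rop] at h; split_ifs at h <;> simp [isVV0] at h
  | D b i2 r2 s2 =>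
      cases b
      · rfl
      · simp only [BT.Rop] at h; split_ifs at h <;> simp [isVV0] at h
  | M b i2 r2 =>
      cases b
      · rfl
      · simp only [BT.Rop] at h; split_ifs at h <;> simp [isVV0] at h
  | P j => simp only [BT.Rop] at h; split_ifs at h <;> simp [isVV0] at h
  | zero => simp only [BT.Rop] at h; simp [isVV0] at h
  | one => simp only [BT.Rop] at h; simp [isVV0] at h
  | two => simp only [BT.Rop] at h; simp [isVV0] at h
  | H => simp only [BT.Rop] at h; simp [isVV0] at h

lemma lop_pre_nonP {x y v : BT k} (h : BT.Lop i r s mm t x y v ≠ BT.zero)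
    (hn : BT.isP (BT.Lop i r s mm t x y v) = false) : BT.isP v = false := by
  cases v <;> simp_all [BT.Lop, BT.isP] <;> (try split_ifs at h hn) <;> simp_all [BT.isP]

lemma rop_pre_nonP {x y v : BT k} (h : BT.Rop i r s mm t x y v ≠ BT.zero)
    (hn : BT.isP (BT.Rop i r s mm t x y v) = false) : BT.isP v = false := by
  cases v <;> simp_all [BT.Rop, BT.isP] <;> (try split_ifs at h hn) <;> simp_all [BT.isP]

-- fwd lemmas
variable {T : TM k}

lemma fwd_cases (T : TM k) (i : Fin (k + 1)) (r t : Bool) :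
    (∃ s mm, fwd T i r t = BT.Lop i r s mm t) ∨
      (∃ s mm, fwd T i r t = BT.Rop i r s mm t) := by
  unfold fwd
  rcases h : T.instr i r with ⟨s, d, mm⟩
  cases d
  · exact Or.inl ⟨s, mm, rfl⟩
  · exact Or.inr ⟨s, mm, rfl⟩

lemma fwd_zero_left (y u : BT k) : fwd T i r t BT.zero y u = BT.zero := by
  rcases fwd_cases T i r t with ⟨s, mm, e⟩ | ⟨s, mm, e⟩ <;> rw [e]
  · exact lop_zero_left y u
  · exact rop_zero_left y u

lemma fwd_zero_mid (x u : BT k) : fwd T i r t x BT.zero u = BT.zero := by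
  rcases fwd_cases T i r t with ⟨s, mm, e⟩ | ⟨s, mm, e⟩ <;> rw [e]
  · exact lop_zero_mid x u
  · exact rop_zero_mid x u

lemma fwd_zero_u (x y : BT k) : fwd T i r t x y BT.zero = BT.zero := by
  rcases fwd_cases T i r t with ⟨s, mm, e⟩ | ⟨s, mm, e⟩ <;> rw [e]
  · exact lop_zero_u x y
  · exact rop_zero_u x y

lemma isU_cases {a : BT k} (h : BT.isU a = true) :
    a = BT.one ∨ a = BT.two ∨ a = BT.H := by
  cases a <;> simp_all [BT.isU]

lemma fwd_U_u {u : BT k} (hU : BT.isU u = true) (x y : BT k) :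
    fwd T i r t x y u = BT.zero := by
  rcases fwd_cases T i r t with ⟨s, mm, e⟩ | ⟨s, mm, e⟩ <;> rw [e] <;>
    rcases isU_cases hU with rfl | rfl | rfl
  · exact (lop_U_u x y).1
  · exact (lop_U_u x y).2.1
  · exact (lop_U_u x y).2.2
  · exact (rop_U_u x y).1
  · exact (rop_U_u x y).2.1
  · exact (rop_U_u x y).2.2

lemma isP_fwd {u : BT k} (hu : BT.isP u = false) (x y : BT k) :
    BT.isP (fwd T i r t x y u) = false := by
  rcases fwd_cases T i r t with ⟨s, mm, e⟩ | ⟨s, mm, e⟩ <;> rw [e]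
  · exact isP_lop hu x y
  · exact isP_rop hu x y

lemma vv0_fwd {u : BT k} (hu : isVV0 u = true) (x y : BT k)
    (h : fwd T i r t x y u ≠ BT.zero) : isVV0 (fwd T i r t x y u) = true := by
  rcases fwd_cases T i r t with ⟨s, mm, e⟩ | ⟨s, mm, e⟩ <;> rw [e] at h ⊢
  · exact vv0_lop hu x y h
  · exact vv0_rop hu x y h

lemma fwd_out {x y v : BT k} (h : fwd T i r t x y v ≠ BT.zero) :
    BT.isP (fwd T i r t x y v) = true ∨ BT.isVV (fwd T i r t x y v) = true := by
  rcases fwd_cases T i r t with ⟨s, mm, e⟩ | ⟨s, mm, e⟩ <;> rw [e] at h ⊢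
  · exact lop_out h
  · exact rop_out h

lemma fwd_pre_vv0 {x y v : BT k} (h : isVV0 (fwd T i r t x y v) = true) :
    isVV0 v = true := by
  rcases fwd_cases T i r t with ⟨s, mm, e⟩ | ⟨s, mm, e⟩ <;> rw [e] at h
  · exact lop_pre_vv0 h
  · exact rop_pre_vv0 h

lemma fwd_pre_nonP {x y v : BT k} (h : fwd T i r t x y v ≠ BT.zero)
    (hn : BT.isP (fwd T i r t x y v) = false) : BT.isP v = false := by
  rcases fwd_cases T i r t with ⟨s, mm, e⟩ | ⟨s, mm, e⟩ <;> rw [e] at h hn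
  · exact lop_pre_nonP h hn
  · exact rop_pre_nonP h hn

-- revOp lemmas
lemma revOp_zero_u (F : BT k → BT k → BT k → BT k) (x y : BT k) :
    revOp F x y BT.zero = BT.zero := by
  unfold revOp
  rw [dif_neg]
  rintro ⟨h, -⟩; exact h rfl

lemma revOp_no_pre {F : BT k → BT k → BT k → BT k} {x y u : BT k}
    (h : ∀ v, F x y v ≠ u) : revOp F x y u = BT.zero := by
  unfold revOp
  rw [dif_neg]
  rintro ⟨-, v, hv⟩; exact h v hv

lemma revOp_spec {F : BT k → BT k → BT k → BT k} {x y u : BT k}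
    (h : revOp F x y u ≠ BT.zero) :
    u ≠ BT.zero ∧ F x y (revOp F x y u) = u := by
  unfold revOp at h ⊢
  by_cases hc : u ≠ BT.zero ∧ ∃ v, F x y v = u
  · rw [dif_pos hc] at h ⊢
    exact ⟨hc.1, hc.2.choose_spec⟩
  · rw [dif_neg hc] at h
    exact absurd rfl h

lemma revOp_zero_of {F : BT k → BT k → BT k → BT k} {x y : BT k}
    (h : ∀ v, F x y v = BT.zero) (u : BT k) : revOp F x y u = BT.zero := by
  unfold revOp
  rw [dif_neg]
  rintro ⟨hu, v, hv⟩
  exact hu (by rw [← hv, h v])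

-- mop lemmas
lemma mop_zero_left {b : Bool} (y u : BT k) : mop T i r t b BT.zero y u = BT.zero := by
  cases b
  · exact fwd_zero_left y u
  · exact revOp_zero_of (fun v => fwd_zero_left y v) u

lemma mop_zero_mid {b : Bool} (x u : BT k) : mop T i r t b x BT.zero u = BT.zero := by
  cases b
  · exact fwd_zero_mid x u
  · exact revOp_zero_of (fun v => fwd_zero_mid x v) u

lemma mop_zero_u {b : Bool} (x y : BT k) : mop T i r t b x y BT.zero = BT.zero := by
  cases b
  · exact fwd_zero_u x y
  · exact revOp_zero_u _ x y

lemma mop_U_u {b : Bool} {u : BT k} (hU : BT.isU u = true) (x y : BT k) :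
    mop T i r t b x y u = BT.zero := by
  cases b
  · exact fwd_U_u hU x y
  · refine revOp_no_pre fun v hv => ?_
    by_cases hz : fwd T i r t x y v = BT.zero
    · rw [hz] at hv; rcases isU_cases hU with rfl | rfl | rfl <;> exact absurd hv (by simp)
    · rcases fwd_out hz with hP | hVV <;> rw [hv] at *
      · rcases isU_cases hU with rfl | rfl | rfl <;> simp [BT.isP] at hP
      · rcases isU_cases hU with rfl | rfl | rfl <;> simp [BT.isVV] at hVV

lemma mop_true_eq : mop T i r t true = revOp (fwd T i r t) := rfl

lemma isP_mop {b : Bool} {u : BT k} (hu : BT.isP u = false) (x y : BT k) :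
    BT.isP (mop T i r t b x y u) = false := by
  cases b
  · exact isP_fwd hu x y
  · rw [mop_true_eq]
    by_cases hz : revOp (fwd T i r t) x y u = BT.zero
    · rw [hz]; rfl
    · obtain ⟨hune, hspec⟩ := revOp_spec hz
      have h1 : fwd T i r t x y (revOp (fwd T i r t) x y u) ≠ BT.zero := by
        rw [hspec]; exact hune
      have h2 : BT.isP (fwd T i r t x y (revOp (fwd T i r t) x y u)) = false := by
        rw [hspec]; exact hu
      exact fwd_pre_nonP h1 h2

lemma vv0_mop {b : Bool} {u : BT k} (hu : isVV0 u = true) (x y : BT k)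
    (h : mop T i r t b x y u ≠ BT.zero) : isVV0 (mop T i r t b x y u) = true := by
  cases b
  · exact vv0_fwd hu x y h
  · rw [mop_true_eq] at h ⊢
    obtain ⟨hune, hspec⟩ := revOp_spec h
    have h1 : isVV0 (fwd T i r t x y (revOp (fwd T i r t) x y u)) = true := by
      rw [hspec]; exact hu
    exact fwd_pre_vv0 h1

-- U1op / U2op lemmas
variable {F : BT k → BT k → BT k → BT k}

lemma U1op_zero1 (F : BT k → BT k → BT k → BT k) (y z u : BT k) :
    U1op F BT.zero y z u = BT.zero := by
  have c1 : ¬(prec BT.zero y = true ∧ prec BT.zero z = true ∧ y ≠ z ∧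
      BT.isVV (F BT.zero y u) = true) := by
    rintro ⟨hp, -⟩; rw [prec_zero_left] at hp; exact absurd hp (by simp)
  have c2 : ¬(prec BT.zero y = true ∧ y = z) := by
    rintro ⟨hp, -⟩; rw [prec_zero_left] at hp; exact absurd hp (by simp)
  unfold U1op; rw [if_neg c1, if_neg c2]

lemma U1op_zero2 (F : BT k → BT k → BT k → BT k) (x z u : BT k) :
    U1op F x BT.zero z u = BT.zero := by
  have c1 : ¬(prec x BT.zero = true ∧ prec x z = true ∧ BT.zero ≠ z ∧
      BT.isVV (F x BT.zero u) = true) := by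
    rintro ⟨hp, -⟩; rw [prec_zero_right] at hp; exact absurd hp (by simp)
  have c2 : ¬(prec x BT.zero = true ∧ BT.zero = z) := by
    rintro ⟨hp, -⟩; rw [prec_zero_right] at hp; exact absurd hp (by simp)
  unfold U1op; rw [if_neg c1, if_neg c2]

lemma U1op_zero3 (F : BT k → BT k → BT k → BT k) (x y u : BT k) :
    U1op F x y BT.zero u = BT.zero := by
  have c1 : ¬(prec x y = true ∧ prec x BT.zero = true ∧ y ≠ BT.zero ∧
      BT.isVV (F x y u) = true) := by
    rintro ⟨-, hp, -⟩; rw [prec_zero_right] at hp; exact absurd hp (by simp)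
  have c2 : ¬(prec x y = true ∧ y = BT.zero) := by
    rintro ⟨hp, rfl⟩; rw [prec_zero_right] at hp; exact absurd hp (by simp)
  unfold U1op; rw [if_neg c1, if_neg c2]

lemma U1op_zero4 (hF : ∀ x y, F x y BT.zero = BT.zero) (x y z : BT k) :
    U1op F x y z BT.zero = BT.zero := by
  have c1 : ¬(prec x y = true ∧ prec x z = true ∧ y ≠ z ∧
      BT.isVV (F x y BT.zero) = true) := by
    rintro ⟨-, -, -, hp⟩; rw [hF] at hp; exact absurd hp (by simp [BT.isVV])
  unfold U1op; rw [if_neg c1]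
  split_ifs with c2
  · exact hF x y
  · rfl

lemma U1op_noprec (h : prec x y = false) (z u : BT k) : U1op F x y z u = BT.zero := by
  have c1 : ¬(prec x y = true ∧ prec x z = true ∧ y ≠ z ∧ BT.isVV (F x y u) = true) := by
    rintro ⟨hp, -⟩; rw [h] at hp; exact absurd hp (by simp)
  have c2 : ¬(prec x y = true ∧ y = z) := by
    rintro ⟨hp, -⟩; rw [h] at hp; exact absurd hp (by simp)
  unfold U1op; rw [if_neg c1, if_neg c2]

lemma U1op_of (hxz : prec x z = false) (hyz : y ≠ z) (u : BT k) :
    U1op F x y z u = BT.zero := by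
  have c1 : ¬(prec x y = true ∧ prec x z = true ∧ y ≠ z ∧ BT.isVV (F x y u) = true) := by
    rintro ⟨-, hp, -⟩; rw [hxz] at hp; exact absurd hp (by simp)
  have c2 : ¬(prec x y = true ∧ y = z) := by rintro ⟨-, e⟩; exact hyz e
  unfold U1op; rw [if_neg c1, if_neg c2]

lemma U1op_H_one (x u : BT k) : U1op F x BT.H BT.one u = BT.zero := by
  have c1 : ¬(prec x BT.H = true ∧ prec x BT.one = true ∧ (BT.H : BT k) ≠ BT.one ∧
      BT.isVV (F x BT.H u) = true) := by
    rintro ⟨h1, h2, -⟩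
    rw [prec_H_right h1] at h2
    exact absurd h2 (by rw [prec_two_one]; simp)
  have c2 : ¬(prec x BT.H = true ∧ (BT.H : BT k) = BT.one) := by
    rintro ⟨-, e⟩; exact absurd e (by simp)
  unfold U1op; rw [if_neg c1, if_neg c2]

lemma U1op_one_H (x u : BT k) : U1op F x BT.one BT.H u = BT.zero := by
  have c1 : ¬(prec x BT.one = true ∧ prec x BT.H = true ∧ (BT.one : BT k) ≠ BT.H ∧
      BT.isVV (F x BT.one u) = true) := by
    rintro ⟨h1, h2, -⟩
    rw [prec_H_right h2] at h1
    exact absurd h1 (by rw [prec_two_one]; simp)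
  have c2 : ¬(prec x BT.one = true ∧ (BT.one : BT k) = BT.H) := by
    rintro ⟨-, e⟩; exact absurd e (by simp)
  unfold U1op; rw [if_neg c1, if_neg c2]

lemma U1op_eq_branch2 (hbc : y = z) (hne : U1op F x y z u ≠ BT.zero) :
    U1op F x y z u = F x y u ∧ prec x y = true := by
  have c1 : ¬(prec x y = true ∧ prec x z = true ∧ y ≠ z ∧ BT.isVV (F x y u) = true) := by
    rintro ⟨-, -, e, -⟩; exact e hbc
  unfold U1op at hne ⊢
  rw [if_neg c1] at hne ⊢
  split_ifs at hne ⊢ with c2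
  · exact ⟨rfl, c2.1⟩
  · exact absurd rfl hne

-- U2op
lemma U2op_zero1 (F : BT k → BT k → BT k → BT k) (y z u : BT k) :
    U2op F BT.zero y z u = BT.zero := by
  have c1 : ¬(prec BT.zero z = true ∧ prec y z = true ∧ (BT.zero : BT k) ≠ y ∧
      BT.isVV (F y z u) = true) := by
    rintro ⟨hp, -⟩; rw [prec_zero_left] at hp; exact absurd hp (by simp)
  have c2 : ¬((BT.zero : BT k) = y ∧ prec y z = true) := by
    rintro ⟨rfl, hp⟩
    rw [prec_zero_left] at hp; exact absurd hp (by simp)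
  unfold U2op; rw [if_neg c1, if_neg c2]

lemma U2op_zero2 (F : BT k → BT k → BT k → BT k) (x z u : BT k) :
    U2op F x BT.zero z u = BT.zero := by
  have c1 : ¬(prec x z = true ∧ prec BT.zero z = true ∧ x ≠ BT.zero ∧
      BT.isVV (F BT.zero z u) = true) := by
    rintro ⟨-, hp, -⟩; rw [prec_zero_left] at hp; exact absurd hp (by simp)
  have c2 : ¬(x = BT.zero ∧ prec BT.zero z = true) := by
    rintro ⟨-, hp⟩; rw [prec_zero_left] at hp; exact absurd hp (by simp)
  unfold U2op; rw [if_neg c1, if_neg c2]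

lemma U2op_zero3 (F : BT k → BT k → BT k → BT k) (x y u : BT k) :
    U2op F x y BT.zero u = BT.zero := by
  have c1 : ¬(prec x BT.zero = true ∧ prec y BT.zero = true ∧ x ≠ y ∧
      BT.isVV (F y BT.zero u) = true) := by
    rintro ⟨hp, -⟩; rw [prec_zero_right] at hp; exact absurd hp (by simp)
  have c2 : ¬(x = y ∧ prec y BT.zero = true) := by
    rintro ⟨-, hp⟩; rw [prec_zero_right] at hp; exact absurd hp (by simp)
  unfold U2op; rw [if_neg c1, if_neg c2]

lemma U2op_zero4 (hF : ∀ x y, F x y BT.zero = BT.zero) (x y z : BT k) :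
    U2op F x y z BT.zero = BT.zero := by
  have c1 : ¬(prec x z = true ∧ prec y z = true ∧ x ≠ y ∧
      BT.isVV (F y z BT.zero) = true) := by
    rintro ⟨-, -, -, hp⟩; rw [hF] at hp; exact absurd hp (by simp [BT.isVV])
  unfold U2op; rw [if_neg c1]
  split_ifs with c2
  · exact hF y z
  · rfl

lemma U2op_x_vv0 (ha : isVV0 x = true) (y z u : BT k) : U2op F x y z u = BT.zero := by
  have c1 : ¬(prec x z = true ∧ prec y z = true ∧ x ≠ y ∧ BT.isVV (F y z u) = true) := by
    rintro ⟨hp, -⟩; rw [prec_vv0_left ha] at hp; exact absurd hp (by simp)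
  have c2 : ¬(x = y ∧ prec y z = true) := by
    rintro ⟨e, hp⟩; rw [← e, prec_vv0_left ha] at hp; exact absurd hp (by simp)
  unfold U2op; rw [if_neg c1, if_neg c2]

lemma U2op_y_vv0 (hb : isVV0 y = true) (x z u : BT k) : U2op F x y z u = BT.zero := by
  have c1 : ¬(prec x z = true ∧ prec y z = true ∧ x ≠ y ∧ BT.isVV (F y z u) = true) := by
    rintro ⟨-, hp, -⟩; rw [prec_vv0_left hb] at hp; exact absurd hp (by simp)
  have c2 : ¬(x = y ∧ prec y z = true) := by
    rintro ⟨-, hp⟩; rw [prec_vv0_left hb] at hp; exact absurd hp (by simp)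
  unfold U2op; rw [if_neg c1, if_neg c2]

lemma U2op_z_vv0 (hc : isVV0 z = true) (x y u : BT k) : U2op F x y z u = BT.zero := by
  have c1 : ¬(prec x z = true ∧ prec y z = true ∧ x ≠ y ∧ BT.isVV (F y z u) = true) := by
    rintro ⟨hp, -⟩; rw [prec_vv0_right hc] at hp; exact absurd hp (by simp)
  have c2 : ¬(x = y ∧ prec y z = true) := by
    rintro ⟨-, hp⟩; rw [prec_vv0_right hc] at hp; exact absurd hp (by simp)
  unfold U2op; rw [if_neg c1, if_neg c2]

lemma U2op_two_H (z u : BT k) : U2op F BT.two BT.H z u = BT.zero := by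
  have c1 : ¬(prec BT.two z = true ∧ prec BT.H z = true ∧ (BT.two : BT k) ≠ BT.H ∧
      BT.isVV (F BT.H z u) = true) := by
    rintro ⟨h1, h2, -⟩
    rw [prec_H_left h2] at h1
    exact absurd h1 (by rw [prec_two_one]; simp)
  have c2 : ¬((BT.two : BT k) = BT.H ∧ prec BT.H z = true) := by
    rintro ⟨e, -⟩; exact absurd e (by simp)
  unfold U2op; rw [if_neg c1, if_neg c2]

lemma U2op_H_two (z u : BT k) : U2op F BT.H BT.two z u = BT.zero := by
  have c1 : ¬(prec BT.H z = true ∧ prec BT.two z = true ∧ (BT.H : BT k) ≠ BT.two ∧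
      BT.isVV (F BT.two z u) = true) := by
    rintro ⟨h1, h2, -⟩
    rw [prec_H_left h1] at h2
    exact absurd h2 (by rw [prec_two_one]; simp)
  have c2 : ¬((BT.H : BT k) = BT.two ∧ prec BT.two z = true) := by
    rintro ⟨e, -⟩; exact absurd e (by simp)
  unfold U2op; rw [if_neg c1, if_neg c2]

lemma U2op_eq_branch2 (hab : x = y) (hne : U2op F x y z u ≠ BT.zero) :
    U2op F x y z u = F y z u ∧ prec y z = true := by
  have c1 : ¬(prec x z = true ∧ prec y z = true ∧ x ≠ y ∧ BT.isVV (F y z u) = true) := by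
    rintro ⟨-, -, e, -⟩; exact e hab
  unfold U2op at hne ⊢
  rw [if_neg c1] at hne ⊢
  split_ifs at hne ⊢ with c2
  · exact ⟨rfl, c2.2⟩
  · exact absurd rfl hne

lemma isU_ne_vv0 {a b : BT k} (ha : BT.isU a = true) (hb : isVV0 b = true) : a ≠ b := by
  rintro rfl
  rcases isU_cases ha with rfl | rfl | rfl <;> simp [isVV0] at hb

lemma isU_not_vv {a : BT k} (ha : BT.isU a = true) : BT.isVV a = false := by
  rcases isU_cases ha with rfl | rfl | rfl <;> rfl

lemma isP_barOp_vv {a : BT k} (ha : BT.isVV a = true) : BT.isP (BT.barOp a) = false := by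
  cases a <;> simp_all [BT.isVV, BT.barOp, BT.isP]

lemma barOp_vv {a : BT k} (ha : BT.isVV a = true) : BT.isVV (BT.barOp a) = true := by
  cases a <;> simp_all [BT.isVV, BT.barOp]

lemma U1op_cases {x y z u : BT k} (h : U1op F x y z u ≠ BT.zero) :
    (BT.isVV (F x y u) = true ∧ U1op F x y z u = BT.barOp (F x y u)) ∨
      U1op F x y z u = F x y u := by
  unfold U1op at h ⊢
  split_ifs at h ⊢ with c1 c2
  · exact Or.inl ⟨c1.2.2.2, rfl⟩
  · exact Or.inr rfl
  · exact absurd rfl h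

lemma U2op_cases {x y z u : BT k} (h : U2op F x y z u ≠ BT.zero) :
    (BT.isVV (F y z u) = true ∧ U2op F x y z u = BT.barOp (F y z u)) ∨
      U2op F x y z u = F y z u := by
  unfold U2op at h ⊢
  split_ifs at h ⊢ with c1 c2
  · exact Or.inl ⟨c1.2.2.2, rfl⟩
  · exact Or.inr rfl
  · exact absurd rfl h

-- AA-level notions
variable {m : ℕ}

lemma zero_mem_N {T : TM k} : (0 : ℤ) ∈ Nset T m := by
  unfold Nset; rw [Finset.mem_union]; right; simp

/-- elements of K with a zero at an N-coordinate -/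
def ZeroE {T : TM k} (f : AA T m) : Prop := ∃ x, f (some x) = BT.zero

/-- elements agreeing with some aEl on the N-coordinates -/
def ASh {T : TM k} (f : AA T m) : Prop :=
  ∃ n, n ∈ Nset T m ∧ ∀ x, f (some x) = aEl T m n (some x)

/-- elements all of whose N-coordinate values lie in unbarred V -/
def VL {T : TM k} (f : AA T m) : Prop := ∀ x, isVV0 (f (some x)) = true

lemma aEl_val {T : TM k} (n : ℤ) (x : {x : ℤ // x ∈ Nset T m}) :
    aEl T m n (some x) =
      if (x : ℤ) < n then BT.one else if (x : ℤ) = n then BT.H else BT.two := rfl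

lemma aEl_at {T : TM k} (n : ℤ) (x : {x : ℤ // x ∈ Nset T m}) (h : (x : ℤ) = n) :
    aEl T m n (some x) = BT.H := by
  rw [aEl_val, if_neg (by omega), if_pos h]

lemma aEl_lt {T : TM k} (n : ℤ) (x : {x : ℤ // x ∈ Nset T m}) (h : (x : ℤ) < n) :
    aEl T m n (some x) = BT.one := by
  rw [aEl_val, if_pos h]

lemma aEl_gt {T : TM k} (n : ℤ) (x : {x : ℤ // x ∈ Nset T m}) (h : n < (x : ℤ)) :
    aEl T m n (some x) = BT.two := by
  rw [aEl_val, if_neg (by omega), if_neg (by omega)]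

lemma aEl_isU {T : TM k} (n : ℤ) (x : {x : ℤ // x ∈ Nset T m}) :
    BT.isU (aEl T m n (some x)) = true := by
  rw [aEl_val]; split_ifs <;> rfl

lemma aEl_nonP {T : TM k} (n : ℤ) (x : {x : ℤ // x ∈ Nset T m}) :
    BT.isP (aEl T m n (some x)) = false := by
  rw [aEl_val]; split_ifs <;> rfl

lemma qEl_nonP {T : TM k} (j : Fin 3) (x : {x : ℤ // x ∈ Nset T m}) :
    BT.isP (qEl T m j (some x)) = false := by
  show BT.isP (if (x : ℤ) < 0 then _ else if (x : ℤ) = 0 then _ else _) = false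
  split_ifs <;> rfl

lemma qEl_vv0 {T : TM k} (j : Fin 3) (x : {x : ℤ // x ∈ Nset T m}) :
    isVV0 (qEl T m j (some x)) = true := by
  show isVV0 (if (x : ℤ) < 0 then _ else if (x : ℤ) = 0 then _ else _) = true
  split_ifs <;> rfl

/-- no element of K takes a value in P at an N-coordinate -/
lemma inK_noP {T : TM k} {f : AA T m} (hf : InK T m f) :
    ∀ x, BT.isP (f (some x)) = false := by
  induction hf with
  | gen_a n hn => exact fun x => aEl_nonP n x
  | gen_q j => exact fun x => qEl_nonP j x
  | zeroOp => exact fun x => rfl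
  | t0 hf ihf =>
      exact fun x => isP_T0 (ihf x)
  | t1 hf hg ihf ihg =>
      exact fun x => isP_T1 (ihf x)
  | meet hf hg ihf ihg =>
      exact fun x => isP_meet (ihf x)
  | meetI j hf hg ihf ihg =>
      exact fun x => isP_meetI (ihf x)
  | jop hf hg hh ihf ihg ihh =>
      exact fun x => isP_J' (ihf x)
  | s1 hf hg hh hp ihf ihg ihh ihp =>
      exact fun x => isP_S1 (ihg x)
  | s2 hf hg hh hp hq ihf ihg ihh ihp ihq =>
      exact fun x => isP_S2 (ihh x)
  | mach i hi r t b hf hg hu ihf ihg ihu =>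
      exact fun x => isP_mop (ihu x) _ _
  | u1 i hi r t b hf hg hh hp ihf ihg ihh ihp =>
      rename_i f g h p
      intro x
      beta_reduce
      by_cases hz : U1op (mop T i r t b) (f (some x)) (g (some x)) (h (some x))
          (p (some x)) = BT.zero
      · rw [hz]; rfl
      · rcases U1op_cases hz with ⟨hvv, e⟩ | e
        · rw [e]; exact isP_barOp_vv hvv
        · rw [e]; exact isP_mop (ihp x) _ _
  | u2 i hi r t b hf hg hh hp ihf ihg ihh ihp =>
      rename_i f g h p
      intro x
      beta_reduce
      by_cases hz : U2op (mop T i r t b) (f (some x)) (g (some x)) (h (some x))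
          (p (some x)) = BT.zero
      · rw [hz]; rfl
      · rcases U2op_cases hz with ⟨hvv, e⟩ | e
        · rw [e]; exact isP_barOp_vv hvv
        · rw [e]; exact isP_mop (ihp x) _ _

/-- classification of the elements of K (restricted to N-coordinates) -/
lemma inK_cl {T : TM k} {f : AA T m} (hf : InK T m f) : ZeroE f ∨ ASh f ∨ VL f := by
  induction hf with
  | gen_a n hn => exact Or.inr (Or.inl ⟨n, hn, fun x => rfl⟩)
  | gen_q j => exact Or.inr (Or.inr fun x => qEl_vv0 j x)
  | zeroOp => exact Or.inl ⟨⟨0, zero_mem_N⟩, rfl⟩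
  | t0 hf ihf =>
      rename_i f
      by_cases hz : ∃ x, BT.T0 (f (some x)) = BT.zero
      · exact Or.inl hz
      push_neg at hz
      rcases ihf with ⟨x0, e⟩ | ⟨n, hn, hv⟩ | hv
      · exact absurd (by rw [e]; rfl) (hz x0)
      · exfalso
        apply hz ⟨0, zero_mem_N⟩
        rw [hv _, aEl_val]
        split_ifs <;> rfl
      · refine Or.inr (Or.inr fun x => ?_)
        beta_reduce
        rw [T0_vv0 (hv x) (hz x)]; exact hv x
  | t1 hf hg ihf ihg =>
      rename_i f g
      by_cases hz : ∃ x, BT.T1 (f (some x)) (g (some x)) = BT.zero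
      · exact Or.inl hz
      push_neg at hz
      refine Or.inr (Or.inr fun x => ?_)
      beta_reduce
      obtain ⟨-, hV, hout⟩ := T1_nonP (inK_noP hf x) (hz x)
      rw [hout]; exact isV10_vv0 hV
  | meet hf hg ihf ihg =>
      rename_i f g
      by_cases hz : ∃ x, BT.meet (f (some x)) (g (some x)) = BT.zero
      · exact Or.inl hz
      push_neg at hz
      have he : ∀ x, BT.meet (f (some x)) (g (some x)) = f (some x) :=
        fun x => (meet_nonP (inK_noP hf x) (hz x)).2
      rcases ihf with ⟨x0, e⟩ | ⟨n, hn, hv⟩ | hv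
      · exact absurd (by rw [he x0]; exact e) (hz x0)
      · exact Or.inr (Or.inl ⟨n, hn, fun x => (he x).trans (hv x)⟩)
      · exact Or.inr (Or.inr fun x => by beta_reduce; rw [he x]; exact hv x)
  | meetI j hf hg ihf ihg =>
      rename_i f g
      by_cases hz : ∃ x, BT.meetI j (f (some x)) (g (some x)) = BT.zero
      · exact Or.inl hz
      push_neg at hz
      refine Or.inr (Or.inr fun x => ?_)
      beta_reduce
      obtain ⟨-, hV, hout⟩ := meetI_ne (inK_noP hf x) (hz x)
      rw [hout]; exact isV10_vv0 hV
  | jop hf hg hh ihf ihg ihh =>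
      rename_i f g h
      by_cases hz : ∃ x, BT.J' (f (some x)) (g (some x)) (h (some x)) = BT.zero
      · exact Or.inl hz
      push_neg at hz
      have he : ∀ x, BT.J' (f (some x)) (g (some x)) (h (some x)) = f (some x) :=
        fun x => J'_nonP (inK_noP hf x) (hz x)
      rcases ihf with ⟨x0, e⟩ | ⟨n, hn, hv⟩ | hv
      · exact absurd (by rw [he x0]; exact e) (hz x0)
      · exact Or.inr (Or.inl ⟨n, hn, fun x => (he x).trans (hv x)⟩)
      · exact Or.inr (Or.inr fun x => by beta_reduce; rw [he x]; exact hv x)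
  | s1 hf hg hh hp ihf ihg ihh ihp =>
      rename_i f g h p
      by_cases hz : ∃ x, BT.S1 (f (some x)) (g (some x)) (h (some x)) (p (some x)) = BT.zero
      · exact Or.inl hz
      push_neg at hz
      have he : ∀ x, BT.S1 (f (some x)) (g (some x)) (h (some x)) (p (some x)) = g (some x) :=
        fun x => S1_nonP (inK_noP hg x) (hz x)
      rcases ihg with ⟨x0, e⟩ | ⟨n, hn, hv⟩ | hv
      · exact absurd (by rw [he x0]; exact e) (hz x0)
      · exact Or.inr (Or.inl ⟨n, hn, fun x => (he x).trans (hv x)⟩)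
      · exact Or.inr (Or.inr fun x => by beta_reduce; rw [he x]; exact hv x)
  | s2 hf hg hh hp hq ihf ihg ihh ihp ihq =>
      rename_i f g h p q
      by_cases hz : ∃ x, BT.S2 (f (some x)) (g (some x)) (h (some x)) (p (some x))
          (q (some x)) = BT.zero
      · exact Or.inl hz
      push_neg at hz
      have he : ∀ x, BT.S2 (f (some x)) (g (some x)) (h (some x)) (p (some x)) (q (some x))
          = h (some x) := fun x => S2_nonP (inK_noP hh x) (hz x)
      rcases ihh with ⟨x0, e⟩ | ⟨n, hn, hv⟩ | hv
      · exact absurd (by rw [he x0]; exact e) (hz x0)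
      · exact Or.inr (Or.inl ⟨n, hn, fun x => (he x).trans (hv x)⟩)
      · exact Or.inr (Or.inr fun x => by beta_reduce; rw [he x]; exact hv x)
  | mach i hi r t b hf hg hu ihf ihg ihu =>
      rename_i f g u
      by_cases hz : ∃ x, mop T i r t b (f (some x)) (g (some x)) (u (some x)) = BT.zero
      · exact Or.inl hz
      push_neg at hz
      rcases ihu with ⟨x0, e⟩ | ⟨n, hn, hv⟩ | hv
      · exact absurd (by rw [e]; exact mop_zero_u _ _) (hz x0)
      · refine absurd ?_ (hz ⟨0, zero_mem_N⟩)
        rw [hv (⟨0, zero_mem_N⟩ : {x : ℤ // x ∈ Nset T m})]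
        exact mop_U_u (aEl_isU n _) _ _
      · exact Or.inr (Or.inr fun x => vv0_mop (hv x) _ _ (hz x))
  | u1 i hi r t b hf hg hh hp ihf ihg ihh ihp =>
      rename_i f g h p
      by_cases hz : ∃ x, U1op (mop T i r t b) (f (some x)) (g (some x)) (h (some x))
          (p (some x)) = BT.zero
      · exact Or.inl hz
      push_neg at hz
      rcases ihg with ⟨x0, e⟩ | ⟨q, hq, hgv⟩ | hgv
      · exact absurd (by rw [e]; exact U1op_zero2 _ _ _ _) (hz x0)
      · rcases ihh with ⟨x0, e⟩ | ⟨s, hs, hhv⟩ | hhv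
        · exact absurd (by rw [e]; exact U1op_zero3 _ _ _ _) (hz x0)
        · by_cases hqs : q = s
          · subst hqs
            have hgh : ∀ x, g (some x) = h (some x) := fun x => (hgv x).trans (hhv x).symm
            have he : ∀ x, U1op (mop T i r t b) (f (some x)) (g (some x)) (h (some x))
                (p (some x)) = mop T i r t b (f (some x)) (g (some x)) (p (some x)) :=
              fun x => (U1op_eq_branch2 (hgh x) (hz x)).1
            rcases ihp with ⟨x0, e⟩ | ⟨n2, hn2, hpv⟩ | hpv
            · exact absurd (by rw [e]; exact U1op_zero4 (fun a b => mop_zero_u a b) _ _ _)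
                (hz x0)
            · refine absurd ?_ (hz ⟨0, zero_mem_N⟩)
              rw [he _, hpv (⟨0, zero_mem_N⟩ : {x : ℤ // x ∈ Nset T m})]
              exact mop_U_u (aEl_isU n2 _) _ _
            · refine Or.inr (Or.inr fun x => ?_)
              beta_reduce
              rw [he x]
              exact vv0_mop (hpv x) _ _ (by rw [← he x]; exact hz x)
          · exfalso
            rcases lt_or_gt_of_ne hqs with hlt | hlt
            · have hmem : min q s ∈ Nset T m := by rw [min_eq_left hlt.le]; exact hq
              apply hz ⟨min q s, hmem⟩
              have e1 : g (some ⟨min q s, hmem⟩) = BT.H := by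
                rw [hgv _]; exact aEl_at q _ (by simp; omega)
              have e2 : h (some ⟨min q s, hmem⟩) = BT.one := by
                rw [hhv _]; exact aEl_lt s _ (by simp; omega)
              rw [e1, e2]; exact U1op_H_one _ _
            · have hmem : min q s ∈ Nset T m := by rw [min_eq_right hlt.le]; exact hs
              apply hz ⟨min q s, hmem⟩
              have e1 : g (some ⟨min q s, hmem⟩) = BT.one := by
                rw [hgv _]; exact aEl_lt q _ (by simp; omega)
              have e2 : h (some ⟨min q s, hmem⟩) = BT.H := by
                rw [hhv _]; exact aEl_at s _ (by simp; omega)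
              rw [e1, e2]; exact U1op_one_H _ _
        · refine absurd ?_ (hz ⟨0, zero_mem_N⟩)
          exact U1op_of (prec_vv0_right (hhv _) _)
            (isU_ne_vv0 (by rw [hgv _]; exact aEl_isU _ _) (hhv _)) _
      · refine absurd ?_ (hz ⟨0, zero_mem_N⟩)
        exact U1op_noprec (prec_vv0_right (hgv _) _) _ _
  | u2 i hi r t b hf hg hh hp ihf ihg ihh ihp =>
      rename_i f g h p
      by_cases hz : ∃ x, U2op (mop T i r t b) (f (some x)) (g (some x)) (h (some x))
          (p (some x)) = BT.zero
      · exact Or.inl hz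
      push_neg at hz
      rcases ihh with ⟨x0, e⟩ | ⟨s, hs, hhv⟩ | hhv
      · exact absurd (by rw [e]; exact U2op_zero3 _ _ _ _) (hz x0)
      · rcases ihf with ⟨x0, e⟩ | ⟨pp, hpp, hfv⟩ | hfv
        · exact absurd (by rw [e]; exact U2op_zero1 _ _ _ _) (hz x0)
        · rcases ihg with ⟨x0, e⟩ | ⟨q, hq, hgv⟩ | hgv
          · exact absurd (by rw [e]; exact U2op_zero2 _ _ _ _) (hz x0)
          · by_cases hpq : pp = q
            · subst hpq
              have hfg : ∀ x, f (some x) = g (some x) := fun x => (hfv x).trans (hgv x).symm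
              have he : ∀ x, U2op (mop T i r t b) (f (some x)) (g (some x)) (h (some x))
                  (p (some x)) = mop T i r t b (g (some x)) (h (some x)) (p (some x)) :=
                fun x => (U2op_eq_branch2 (hfg x) (hz x)).1
              rcases ihp with ⟨x0, e⟩ | ⟨n2, hn2, hpv⟩ | hpv
              · exact absurd (by rw [e]; exact U2op_zero4 (fun a b => mop_zero_u a b) _ _ _)
                  (hz x0)
              · refine absurd ?_ (hz ⟨0, zero_mem_N⟩)
                rw [he _, hpv (⟨0, zero_mem_N⟩ : {x : ℤ // x ∈ Nset T m})]
                exact mop_U_u (aEl_isU n2 _) _ _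
              · refine Or.inr (Or.inr fun x => ?_)
                beta_reduce
                rw [he x]
                exact vv0_mop (hpv x) _ _ (by rw [← he x]; exact hz x)
            · exfalso
              rcases lt_or_gt_of_ne hpq with hlt | hlt
              · have hmem : max pp q ∈ Nset T m := by rw [max_eq_right hlt.le]; exact hq
                apply hz ⟨max pp q, hmem⟩
                have e1 : f (some ⟨max pp q, hmem⟩) = BT.two := by
                  rw [hfv _]; exact aEl_gt pp _ (by simp; omega)
                have e2 : g (some ⟨max pp q, hmem⟩) = BT.H := by
                  rw [hgv _]; exact aEl_at q _ (by simp; omega)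
                rw [e1, e2]; exact U2op_two_H _ _
              · have hmem : max pp q ∈ Nset T m := by rw [max_eq_left hlt.le]; exact hpp
                apply hz ⟨max pp q, hmem⟩
                have e1 : f (some ⟨max pp q, hmem⟩) = BT.H := by
                  rw [hfv _]; exact aEl_at pp _ (by simp; omega)
                have e2 : g (some ⟨max pp q, hmem⟩) = BT.two := by
                  rw [hgv _]; exact aEl_gt q _ (by simp; omega)
                rw [e1, e2]; exact U2op_H_two _ _
          · refine absurd ?_ (hz ⟨0, zero_mem_N⟩)
            exact U2op_y_vv0 (hgv _) _ _ _
        · refine absurd ?_ (hz ⟨0, zero_mem_N⟩)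
          exact U2op_x_vv0 (hfv _) _ _ _
      · refine absurd ?_ (hz ⟨0, zero_mem_N⟩)
        exact U2op_z_vv0 (hhv _) _ _ _

/-- polynomials of K map K-tuples into K -/
lemma polyK_inK {T : TM k} : ∀ {n : ℕ} {p : (Fin n → AA T m) → AA T m},
    PolyK T m p → ∀ v : Fin n → AA T m, (∀ i, InK T m (v i)) → InK T m (p v) := by
  intro n p hp
  induction hp with
  | proj i => exact fun v hv => hv i
  | const c hc => exact fun v hv => hc
  | zeroOp => exact fun v hv => InK.zeroOp
  | t0 hp ihp => exact fun v hv => InK.t0 (ihp v hv)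
  | t1 hp hq ihp ihq => exact fun v hv => InK.t1 (ihp v hv) (ihq v hv)
  | meet hp hq ihp ihq => exact fun v hv => InK.meet (ihp v hv) (ihq v hv)
  | meetI j hp hq ihp ihq => exact fun v hv => InK.meetI j (ihp v hv) (ihq v hv)
  | jop hp hq hr ihp ihq ihr => exact fun v hv => InK.jop (ihp v hv) (ihq v hv) (ihr v hv)
  | s1 hp hq hr hs ihp ihq ihr ihs =>
      exact fun v hv => InK.s1 (ihp v hv) (ihq v hv) (ihr v hv) (ihs v hv)
  | s2 hp hq hr hs hw ihp ihq ihr ihs ihw =>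
      exact fun v hv => InK.s2 (ihp v hv) (ihq v hv) (ihr v hv) (ihs v hv) (ihw v hv)
  | mach i hi r t b hp hq ihu ihp ihq ihu2 =>
      exact fun v hv => InK.mach i hi r t b (ihp v hv) (ihq v hv) (ihu2 v hv)
  | u1 i hi r t b hp hq hr hs ihp ihq ihr ihs =>
      exact fun v hv => InK.u1 i hi r t b (ihp v hv) (ihq v hv) (ihr v hv) (ihs v hv)
  | u2 i hi r t b hp hq hr hs ihp ihq ihr ihs =>
      exact fun v hv => InK.u2 i hi r t b (ihp v hv) (ihq v hv) (ihr v hv) (ihs v hv)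

/-- Key dichotomy: every polynomial of K is constant on K, or maps common zeros
of its arguments to elements of K₀. -/
lemma dagger {T : TM k} : ∀ {n : ℕ} {p : (Fin n → AA T m) → AA T m}, PolyK T m p →
    (∀ v w : Fin n → AA T m, (∀ i, InK T m (v i)) → (∀ i, InK T m (w i)) → p v = p w) ∨
    (∀ v : Fin n → AA T m, (∀ i, InK T m (v i)) → ∀ x, (∀ i, v i (some x) = BT.zero) →
      ∃ x', p v (some x') = BT.zero) := by
  intro n p hp
  induction hp with
  | proj i => exact Or.inr fun v hv x hx => ⟨x, hx i⟩
  | const c hc => exact Or.inl fun v w _ _ => rfl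
  | zeroOp => exact Or.inr fun v hv x hx => ⟨x, rfl⟩
  | t0 hp ihp =>
      rcases ihp with hC | hZ
      · exact Or.inl fun v w hv hw => by funext y; beta_reduce; rw [hC v w hv hw]
      · refine Or.inr fun v hv x hx => ?_
        obtain ⟨x', e⟩ := hZ v hv x hx
        exact ⟨x', by beta_reduce; rw [e]; exact T0_zero⟩
  | t1 hp hq ihp ihq =>
      rcases ihp with hC | hZ
      · rcases ihq with hC2 | hZ2
        · exact Or.inl fun v w hv hw => by funext y; beta_reduce; rw [hC v w hv hw, hC2 v w hv hw]
        · refine Or.inr fun v hv x hx => ?_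
          obtain ⟨x', e⟩ := hZ2 v hv x hx
          exact ⟨x', by beta_reduce; rw [e]; exact T1_zero_right _⟩
      · refine Or.inr fun v hv x hx => ?_
        obtain ⟨x', e⟩ := hZ v hv x hx
        exact ⟨x', by beta_reduce; rw [e]; exact T1_zero_left _⟩
  | meet hp hq ihp ihq =>
      rcases ihp with hC | hZ
      · rcases ihq with hC2 | hZ2
        · exact Or.inl fun v w hv hw => by funext y; beta_reduce; rw [hC v w hv hw, hC2 v w hv hw]
        · refine Or.inr fun v hv x hx => ?_
          obtain ⟨x', e⟩ := hZ2 v hv x hx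
          exact ⟨x', by beta_reduce; rw [e]; exact meet_zero_right _⟩
      · refine Or.inr fun v hv x hx => ?_
        obtain ⟨x', e⟩ := hZ v hv x hx
        exact ⟨x', by beta_reduce; rw [e]; exact meet_zero_left _⟩
  | meetI j hp hq ihp ihq =>
      rcases ihp with hC | hZ
      · rcases ihq with hC2 | hZ2
        · exact Or.inl fun v w hv hw => by funext y; beta_reduce; rw [hC v w hv hw, hC2 v w hv hw]
        · refine Or.inr fun v hv x hx => ?_
          obtain ⟨x', e⟩ := hZ2 v hv x hx
          exact ⟨x', by beta_reduce; rw [e]; exact meetI_zero_right j _⟩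
      · refine Or.inr fun v hv x hx => ?_
        obtain ⟨x', e⟩ := hZ v hv x hx
        exact ⟨x', by beta_reduce; rw [e]; exact meetI_zero_left j _⟩
  | jop hp hq hr ihp ihq ihr =>
      rename_i p1 p2 p3
      rcases ihp with hC | hZ
      · rcases ihq with hC2 | hZ2
        · rcases ihr with hC3 | hZ3
          · exact Or.inl fun v w hv hw => by
              funext y; beta_reduce; rw [hC v w hv hw, hC2 v w hv hw, hC3 v w hv hw]
          · -- third argument vanishes somewhere: the classification dance
            refine Or.inr fun v hv x hx => ?_
            obtain ⟨x3, e3⟩ := hZ3 v hv x hx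
            have hk1 : InK T m (p1 v) := polyK_inK hp v hv
            have hk2 : InK T m (p2 v) := polyK_inK hq v hv
            by_cases hab : p1 v (some x3) = p2 v (some x3) ∨
                (BT.isP (p1 v (some x3)) = true ∧ BT.isP (p2 v (some x3)) = true)
            · refine ⟨x3, ?_⟩
              beta_reduce
              rw [e3]
              show BT.J' _ _ _ = _
              unfold BT.J'
              rw [if_pos hab]
              exact meet_zero_right _
            · by_cases hbar : BT.isVV (p2 v (some x3)) = true ∧
                  p1 v (some x3) = BT.barOp (p2 v (some x3))
              · by_cases hb0 : isVV0 (p2 v (some x3)) = true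
                · -- p1 v has a barred value, hence a zero
                  have hz1 : ZeroE (p1 v) := by
                    rcases inK_cl hk1 with h | ⟨nn, hnn, hvv⟩ | hvv
                    · exact h
                    · exfalso
                      have : BT.isVV (p1 v (some x3)) = false := by
                        rw [hvv x3]; exact isU_not_vv (aEl_isU nn x3)
                      rw [hbar.2, barOp_vv hbar.1] at this
                      exact absurd this (by simp)
                    · exfalso
                      have := hvv x3
                      rw [hbar.2, isVV0_barOp hb0] at this
                      exact absurd this (by simp)
                  obtain ⟨x4, e4⟩ := hz1
                  exact ⟨x4, by beta_reduce; rw [e4]; exact J'_zero_left _ _⟩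
                · -- p2 v has a barred value, hence a zero
                  have hz2 : ZeroE (p2 v) := by
                    rcases inK_cl hk2 with h | ⟨nn, hnn, hvv⟩ | hvv
                    · exact h
                    · exfalso
                      have : BT.isVV (p2 v (some x3)) = false := by
                        rw [hvv x3]; exact isU_not_vv (aEl_isU nn x3)
                      rw [hbar.1] at this
                      exact absurd this (by simp)
                    · exact absurd (hvv x3) hb0
                  obtain ⟨x5, e5⟩ := hz2
                  exact ⟨x5, by beta_reduce; rw [e5]; exact J'_zero_mid _ _⟩
              · refine ⟨x3, ?_⟩
                beta_reduce
                show BT.J' _ _ _ = _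
                unfold BT.J'
                rw [if_neg hab, if_neg hbar]
        · refine Or.inr fun v hv x hx => ?_
          obtain ⟨x', e⟩ := hZ2 v hv x hx
          exact ⟨x', by beta_reduce; rw [e]; exact J'_zero_mid _ _⟩
      · refine Or.inr fun v hv x hx => ?_
        obtain ⟨x', e⟩ := hZ v hv x hx
        exact ⟨x', by beta_reduce; rw [e]; exact J'_zero_left _ _⟩
  | s1 hp hq hr hs ihp ihq ihr ihs =>
      rename_i p1 p2 p3 p4
      rcases ihq with hC2 | hZ2
      · rcases ihr with hC3 | hZ3
        · rcases ihs with hC4 | hZ4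
          · rcases ihp with hC1 | hZ1
            · exact Or.inl fun v w hv hw => by
                funext y
                beta_reduce
                rw [hC1 v w hv hw, hC2 v w hv hw, hC3 v w hv hw, hC4 v w hv hw]
            · refine Or.inr fun v hv x hx => ?_
              obtain ⟨x', e⟩ := hZ1 v hv x hx
              refine ⟨x', ?_⟩
              beta_reduce
              rw [e]
              exact S1_zero_u (inK_noP (polyK_inK hq v hv) x') _ _
          · refine Or.inr fun v hv x hx => ?_
            obtain ⟨x', e⟩ := hZ4 v hv x hx
            exact ⟨x', by beta_reduce; rw [e]; exact S1_zero_z _ _ _⟩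
        · refine Or.inr fun v hv x hx => ?_
          obtain ⟨x', e⟩ := hZ3 v hv x hx
          exact ⟨x', by beta_reduce; rw [e]; exact S1_zero_y _ _ _⟩
      · refine Or.inr fun v hv x hx => ?_
        obtain ⟨x', e⟩ := hZ2 v hv x hx
        exact ⟨x', by beta_reduce; rw [e]; exact S1_zero_x _ _ _⟩
  | s2 hp hq hr hs hw ihp ihq ihr ihs ihw =>
      rename_i p1 p2 p3 p4 p5
      rcases ihr with hC3 | hZ3
      · rcases ihs with hC4 | hZ4
        · rcases ihw with hC5 | hZ5
          · rcases ihp with hC1 | hZ1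
            · rcases ihq with hC2 | hZ2
              · exact Or.inl fun v w hv hw2 => by
                  funext y
                  beta_reduce
                  rw [hC1 v w hv hw2, hC2 v w hv hw2, hC3 v w hv hw2, hC4 v w hv hw2,
                    hC5 v w hv hw2]
              · refine Or.inr fun v hv x hx => ?_
                obtain ⟨x', e⟩ := hZ2 v hv x hx
                refine ⟨x', ?_⟩
                beta_reduce
                rw [e]
                exact S2_zero_v (inK_noP (polyK_inK hr v hv) x') _ _ _
            · refine Or.inr fun v hv x hx => ?_
              obtain ⟨x', e⟩ := hZ1 v hv x hx
              refine ⟨x', ?_⟩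
              beta_reduce
              rw [e]
              exact S2_zero_u (inK_noP (polyK_inK hr v hv) x') _ _ _
          · refine Or.inr fun v hv x hx => ?_
            obtain ⟨x', e⟩ := hZ5 v hv x hx
            exact ⟨x', by beta_reduce; rw [e]; exact S2_zero_z _ _ _ _⟩
        · refine Or.inr fun v hv x hx => ?_
          obtain ⟨x', e⟩ := hZ4 v hv x hx
          exact ⟨x', by beta_reduce; rw [e]; exact S2_zero_y _ _ _ _⟩
      · refine Or.inr fun v hv x hx => ?_
        obtain ⟨x', e⟩ := hZ3 v hv x hx
        exact ⟨x', by beta_reduce; rw [e]; exact S2_zero_x _ _ _ _⟩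
  | mach i hi r t b hp hq hu ihp ihq ihu =>
      rcases ihp with hC1 | hZ1
      · rcases ihq with hC2 | hZ2
        · rcases ihu with hC3 | hZ3
          · exact Or.inl fun v w hv hw => by
              funext y; beta_reduce; rw [hC1 v w hv hw, hC2 v w hv hw, hC3 v w hv hw]
          · refine Or.inr fun v hv x hx => ?_
            obtain ⟨x', e⟩ := hZ3 v hv x hx
            exact ⟨x', by beta_reduce; rw [e]; exact mop_zero_u _ _⟩
        · refine Or.inr fun v hv x hx => ?_
          obtain ⟨x', e⟩ := hZ2 v hv x hx
          exact ⟨x', by beta_reduce; rw [e]; exact mop_zero_mid _ _⟩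
      · refine Or.inr fun v hv x hx => ?_
        obtain ⟨x', e⟩ := hZ1 v hv x hx
        exact ⟨x', by beta_reduce; rw [e]; exact mop_zero_left _ _⟩
  | u1 i hi r t b hp hq hr hs ihp ihq ihr ihs =>
      rcases ihp with hC1 | hZ1
      · rcases ihq with hC2 | hZ2
        · rcases ihr with hC3 | hZ3
          · rcases ihs with hC4 | hZ4
            · exact Or.inl fun v w hv hw => by
                funext y
                beta_reduce
                rw [hC1 v w hv hw, hC2 v w hv hw, hC3 v w hv hw, hC4 v w hv hw]
            · refine Or.inr fun v hv x hx => ?_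
              obtain ⟨x', e⟩ := hZ4 v hv x hx
              refine ⟨x', ?_⟩
              beta_reduce
              rw [e]
              exact U1op_zero4 (fun a b => mop_zero_u a b) _ _ _
          · refine Or.inr fun v hv x hx => ?_
            obtain ⟨x', e⟩ := hZ3 v hv x hx
            exact ⟨x', by beta_reduce; rw [e]; exact U1op_zero3 _ _ _ _⟩
        · refine Or.inr fun v hv x hx => ?_
          obtain ⟨x', e⟩ := hZ2 v hv x hx
          exact ⟨x', by beta_reduce; rw [e]; exact U1op_zero2 _ _ _ _⟩
      · refine Or.inr fun v hv x hx => ?_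
        obtain ⟨x', e⟩ := hZ1 v hv x hx
        exact ⟨x', by beta_reduce; rw [e]; exact U1op_zero1 _ _ _ _⟩
  | u2 i hi r t b hp hq hr hs ihp ihq ihr ihs =>
      rcases ihp with hC1 | hZ1
      · rcases ihq with hC2 | hZ2
        · rcases ihr with hC3 | hZ3
          · rcases ihs with hC4 | hZ4
            · exact Or.inl fun v w hv hw => by
                funext y
                beta_reduce
                rw [hC1 v w hv hw, hC2 v w hv hw, hC3 v w hv hw, hC4 v w hv hw]
            · refine Or.inr fun v hv x hx => ?_
              obtain ⟨x', e⟩ := hZ4 v hv x hx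
              refine ⟨x', ?_⟩
              beta_reduce
              rw [e]
              exact U2op_zero4 (fun a b => mop_zero_u a b) _ _ _
          · refine Or.inr fun v hv x hx => ?_
            obtain ⟨x', e⟩ := hZ3 v hv x hx
            exact ⟨x', by beta_reduce; rw [e]; exact U2op_zero3 _ _ _ _⟩
        · refine Or.inr fun v hv x hx => ?_
          obtain ⟨x', e⟩ := hZ2 v hv x hx
          exact ⟨x', by beta_reduce; rw [e]; exact U2op_zero2 _ _ _ _⟩
      · refine Or.inr fun v hv x hx => ?_
        obtain ⟨x', e⟩ := hZ1 v hv x hx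
        exact ⟨x', by beta_reduce; rw [e]; exact U2op_zero1 _ _ _ _⟩

end Aux




/-- Lemma 4.2(3): every nonconstant unary polynomial F of K satisfies
F(K₀) ⊆ K₀. -/
theorem statement14 {k : ℕ} (hk : 0 < k) (T : TM k) (m : ℕ)
    (hm : ((cfgStep T)^[m] (Q0 k)).state = 0) :
    ∀ F : AA T m → AA T m, UPolyK T m F →
      (∃ f g : AA T m, InK T m f ∧ InK T m g ∧ F f ≠ F g) →
      ∀ h ∈ K0 T m, F h ∈ K0 T m := by
  intro F hF hnc h hh
  obtain ⟨hhK, x0, hx0⟩ := hh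
  have hFh : InK T m (F h) := Aux.polyK_inK hF (fun _ => h) (fun _ => hhK)
  rcases Aux.dagger hF with hC | hZ
  · exfalso
    obtain ⟨f, g, hf, hg, hne⟩ := hnc
    exact hne (hC (fun _ => f) (fun _ => g) (fun _ => hf) (fun _ => hg))
  · obtain ⟨x', e⟩ := hZ (fun _ => h) (fun _ => hhK) x0 (fun _ => hx0)
    exact ⟨hFh, x', e⟩

end Paper
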